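/- arXiv:1210.7710 — 10 statements merged into one kernel-verified Lean document; each statement's English description precedes it below -/
import Mathlib

section
/- The stabilizer of a full-rank matrix product state parameter under the gauge group action consists exactly of the scalar transformations: if A is full rank and G = (G(0),…,G(N)) is a gauge transformation (G(n) invertible D_n×D_n, G(0) = G(N)) such that A^{[G]} = A, then there exists a nonzero complex number c with G(n) = c·1_{D_n} for every n = 0,…,N. -/
open Matrix
open scoped ComplexOrder

noncomputable section

namespace MPS

variable {N : ℕ} {q : Fin N → ℕ} {D : ℕ → ℕ}

/-- The left virtual density matrices: `l 0 = 1`,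
`l (n+1) = Σ_s A^s(n)† l(n) A^s(n)`. -/
def lMat (A : (n : Fin N) → Fin (q n) → Matrix (Fin (D n.val)) (Fin (D (n.val + 1))) ℂ) :
    (k : ℕ) → k ≤ N → Matrix (Fin (D k)) (Fin (D k)) ℂ
  | 0, _ => 1
  | k + 1, h => ∑ s : Fin (q ⟨k, h⟩),
      (A ⟨k, h⟩ s)ᴴ * lMat A k (Nat.le_of_succ_le h) * A ⟨k, h⟩ s

/-- Auxiliary downward recursion for the right virtual density matrices:
`rAux j = r (N - j)`. -/
def rAux (A : (n : Fin N) → Fin (q n) → Matrix (Fin (D n.val)) (Fin (D (n.val + 1))) ℂ) :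
    (j : ℕ) → j ≤ N → Matrix (Fin (D (N - j))) (Fin (D (N - j))) ℂ
  | 0, _ => 1
  | j + 1, h => ∑ s : Fin (q ⟨N - (j + 1), by omega⟩),
      A ⟨N - (j + 1), by omega⟩ s *
        ((rAux A j (Nat.le_of_succ_le h)).submatrix
          (Fin.cast (congrArg D (by omega : N - (j + 1) + 1 = N - j)))
          (Fin.cast (congrArg D (by omega : N - (j + 1) + 1 = N - j)))) *
      (A ⟨N - (j + 1), by omega⟩ s)ᴴ

/-- The right virtual density matrices: `r N = 1`,
`r (n-1) = Σ_s A^s(n) r(n) A^s(n)†`. -/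
def rMat (A : (n : Fin N) → Fin (q n) → Matrix (Fin (D n.val)) (Fin (D (n.val + 1))) ℂ)
    (n : ℕ) (h : n ≤ N) : Matrix (Fin (D n)) (Fin (D n)) ℂ :=
  (rAux A (N - n) (Nat.sub_le N n)).submatrix
    (Fin.cast (congrArg D (by omega : n = N - (N - n))))
    (Fin.cast (congrArg D (by omega : n = N - (N - n))))

/-- An MPS parameter is full rank if all its virtual density matrices are positive
definite. -/
def FullRank (A : (n : Fin N) → Fin (q n) → Matrix (Fin (D n.val)) (Fin (D (n.val + 1))) ℂ) :
    Prop :=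
  ∀ (k : ℕ) (h : k ≤ N), (lMat A k h).PosDef ∧ (rMat A k h).PosDef

end MPS

/-!
Since `D 0 = 1`, `G 0` is a nonzero scalar `c`. If `G n = c • 1`, the fixed-point equation
says `A^s(n) (G(n+1) - c) = 0` for every `s`, hence `(G(n+1) - c)† l(n+1) (G(n+1) - c) = 0`,
and positive definiteness of `l(n+1)` forces `G(n+1) = c • 1`.
-/

namespace Matrix

variable {m n k ι R K : Type*}

lemma PosDef.eq_zero_of_conjTranspose_mul_mul_eq_zero [Fintype n] [Fintype k]
    [CommRing R] [PartialOrder R] [StarRing R] {P : Matrix n n R} (hP : P.PosDef)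
    {M : Matrix n k R} (h : Mᴴ * P * M = 0) : M = 0 := by
  refine ext_iff_mulVec.mpr fun x => ?_
  rw [zero_mulVec]
  by_contra hx
  have hpos := hP.dotProduct_mulVec_pos hx
  rw [star_mulVec, ← dotProduct_mulVec, mulVec_mulVec, mulVec_mulVec, h] at hpos
  simp at hpos

lemma eq_zero_of_forall_mul_eq_zero_of_posDef_sum [Fintype m] [Fintype n] [Fintype k] [Fintype ι]
    [CommRing R] [PartialOrder R] [StarRing R]
    {L : Matrix m m R} {B : ι → Matrix m n R} (hpos : (∑ s, (B s)ᴴ * L * B s).PosDef)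
    {M : Matrix n k R} (hM : ∀ s, B s * M = 0) : M = 0 := by
  refine hpos.eq_zero_of_conjTranspose_mul_mul_eq_zero ?_
  rw [Matrix.mul_sum, Matrix.sum_mul]
  refine Finset.sum_eq_zero fun s _ => ?_
  calc Mᴴ * ((B s)ᴴ * L * B s) * M = (B s * M)ᴴ * L * (B s * M) := by
        simp only [conjTranspose_mul, Matrix.mul_assoc]
    _ = 0 := by rw [hM s, conjTranspose_zero, Matrix.zero_mul, Matrix.mul_zero]

lemma eq_smul_one_of_posDef_sum [Fintype m] [Fintype n] [Fintype ι] [DecidableEq m] [DecidableEq n]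
    [Field K] [PartialOrder K] [StarRing K]
    {L : Matrix m m K} {B : ι → Matrix m n K} (hpos : (∑ s, (B s)ᴴ * L * B s).PosDef)
    {c : K} (hc : c ≠ 0) {X : Matrix n n K}
    (hX : ∀ s, (c • (1 : Matrix m m K))⁻¹ * B s * X = B s) :
    X = c • 1 := by
  rw [← sub_eq_zero]
  refine eq_zero_of_forall_mul_eq_zero_of_posDef_sum hpos fun s => ?_
  have hinv : (c • (1 : Matrix m m K))⁻¹ = c⁻¹ • 1 :=
    inv_eq_left_inv (by rw [smul_mul_smul_comm, inv_mul_cancel₀ hc, Matrix.one_mul, one_smul])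
  have hBX := hX s
  rw [hinv, smul_mul, Matrix.one_mul, smul_mul, inv_smul_eq_iff₀ hc] at hBX
  rw [Matrix.mul_sub, Matrix.mul_smul, Matrix.mul_one, hBX, sub_self]

lemma eq_smul_one_of_subsingleton [Semiring R] [DecidableEq n] [Subsingleton n]
    (M : Matrix n n R) (i : n) : M = M i i • 1 := by
  ext j l
  rw [Subsingleton.elim j i, Subsingleton.elim l i]
  simp

end Matrix

namespace MPS

lemma lMat_succ {N : ℕ} {q : Fin N → ℕ} {D : ℕ → ℕ}
    (A : (n : Fin N) → Fin (q n) → Matrix (Fin (D n.val)) (Fin (D (n.val + 1))) ℂ)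
    (k : ℕ) (h : k + 1 ≤ N) :
    lMat A (k + 1) h =
      ∑ s, (A ⟨k, h⟩ s)ᴴ * lMat A k (Nat.le_of_succ_le h) * A ⟨k, h⟩ s :=
  rfl

end MPS

theorem mps_stabilizer_eq_scalars_general (N : ℕ) (q : Fin N → ℕ) (D : ℕ → ℕ)
    (h0 : D 0 = 1)
    (A : (n : Fin N) → Fin (q n) → Matrix (Fin (D n.val)) (Fin (D (n.val + 1))) ℂ)
    (hA : MPS.FullRank A)
    (G : (n : ℕ) → Matrix (Fin (D n)) (Fin (D n)) ℂ)
    (hG : ∀ n, n ≤ N → IsUnit (G n))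
    (hfix : ∀ (n : Fin N) (s : Fin (q n)), (G n.val)⁻¹ * A n s * G (n.val + 1) = A n s) :
    ∃ c : ℂ, c ≠ 0 ∧ ∀ n, n ≤ N → G n = c • (1 : Matrix (Fin (D n)) (Fin (D n)) ℂ) := by
  have : Subsingleton (Fin (D 0)) := h0 ▸ inferInstance
  let i₀ : Fin (D 0) := ⟨0, by omega⟩
  have hG₀ : G 0 = G 0 i₀ i₀ • 1 := (G 0).eq_smul_one_of_subsingleton i₀
  have hc : G 0 i₀ i₀ ≠ 0 := by
    rw [← det_eq_elem_of_subsingleton (G 0) i₀]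
    exact ((isUnit_iff_isUnit_det _).mp (hG 0 N.zero_le)).ne_zero
  refine ⟨G 0 i₀ i₀, hc, fun n => ?_⟩
  induction n with
  | zero => exact fun _ => hG₀
  | succ n ih =>
    intro h
    refine eq_smul_one_of_posDef_sum (MPS.lMat_succ A n h ▸ (hA (n + 1) h).1) hc fun s => ?_
    rw [← ih (by omega)]
    exact hfix ⟨n, h⟩ s

/-- **The stabilizer of a full-rank MPS parameter consists exactly of scalar gauge
transformations:** if `A` is full rank and `G` is a gauge transformation (each `G n`
invertible, `G 0 = G N`) with `A^{[G]} = A`, then there is a nonzero `c : ℂ` with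
`G n = c • 1` for every `n = 0, …, N`. -/
theorem mps_stabilizer_eq_scalars (N : ℕ) (q : Fin N → ℕ) (D : ℕ → ℕ)
    (h0 : D 0 = 1) (hN : D N = 1)
    (A : (n : Fin N) → Fin (q n) → Matrix (Fin (D n.val)) (Fin (D (n.val + 1))) ℂ)
    (hA : MPS.FullRank A)
    (G : (n : ℕ) → Matrix (Fin (D n)) (Fin (D n)) ℂ)
    (hG : ∀ n, n ≤ N → IsUnit (G n))
    (hbc : G N = (G 0).submatrix (Fin.cast (hN.trans h0.symm)) (Fin.cast (hN.trans h0.symm)))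
    (hfix : ∀ (n : Fin N) (s : Fin (q n)), (G n.val)⁻¹ * A n s * G (n.val + 1) = A n s) :
    ∃ c : ℂ, c ≠ 0 ∧ ∀ n, n ≤ N → G n = c • (1 : Matrix (Fin (D n)) (Fin (D n)) ℂ) :=
  mps_stabilizer_eq_scalars_general N q D h0 A hA G hG hfix
end
end

section
/- A full-rank matrix product state with open boundary conditions determines its parameters uniquely up to gauge: if A and A' are full-rank MPS parameters with the same local and bond dimensions and Ψ[A] = Ψ[A'], then there exist invertible complex D_n×D_n matrices G(n) for n = 1,…,N−1 such that, setting G(0) = G(N) = 1, one has (A')^s(n) = G(n−1)^{-1} A^s(n) G(n) for all n = 1,…,N and all s = 1,…,q_n. -/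
open Matrix
open scoped ComplexOrder

noncomputable section

namespace MPS

variable {N : ℕ} {q : Fin N → ℕ} {D : ℕ → ℕ}

/-- The partial ordered product `A^{s_0}(0) ⋯ A^{s_{k-1}}(k-1)`. -/
def prodAux (A : (n : Fin N) → Fin (q n) → Matrix (Fin (D n.val)) (Fin (D (n.val + 1))) ℂ)
    (s : (n : Fin N) → Fin (q n)) : (k : ℕ) → k ≤ N → Matrix (Fin (D 0)) (Fin (D k)) ℂ
  | 0, _ => 1
  | k + 1, h => prodAux A s k (Nat.le_of_succ_le h) * A ⟨k, h⟩ (s ⟨k, h⟩)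

/-- The matrix product state `Ψ[A]`, as the family of its coefficients
`tr[A^{s_1}(1) ⋯ A^{s_N}(N)]`. -/
def psi (hD : D N = D 0)
    (A : (n : Fin N) → Fin (q n) → Matrix (Fin (D n.val)) (Fin (D (n.val + 1))) ℂ) :
    ((n : Fin N) → Fin (q n)) → ℂ :=
  fun s => Matrix.trace ((prodAux A s N le_rfl).submatrix id (Fin.cast hD.symm))

end MPS

/-!
Cutting the chain after the first `k` sites writes each coefficient as `L_k(s) R_k(t)`, a row
built from the first `k` tensors times a column built from the others (`s` and `t` spliced at
`k`). By induction on `k`, positivity of `l(k)` ensures that the rows `L_k(s)` have no common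
kernel vector, and positivity of `r(k)` ensures the same for the columns `R_k(t)`. Hence the two
factorisations `L_k R_k = L'_k R'_k` of the coefficient matrix differ by an invertible `G(k)`
with `L_k G(k) = L'_k`, and the rows `L_k(s)` determine `G(k)` uniquely. Comparing the cuts at
`k` and `k + 1`, which differ by one tensor, gives `G(k) A'(k) = A(k) G(k+1)`; at the ends
`L_0 = L'_0 = 1` and `L_N = L'_N = Ψ`, which forces `G(0) = G(N) = 1`.
-/

open Function

namespace Matrix

section Cancel

variable {R : Type*} [Semiring R] {l m n d : Type*} [Fintype d]

theorem mul_left_cancel_of_mulVec_injective {L : Matrix m d R} {X Y : Matrix d n R}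
    (hL : Injective L.mulVec) (h : L * X = L * Y) : X = Y :=
  ext fun i j => congrFun (hL (funext fun i' => congrFun (congrFun h i') j)) i

theorem mul_right_cancel_of_vecMul_injective {X Y : Matrix l d R} {M : Matrix d n R}
    (hM : Injective M.vecMul) (h : X * M = Y * M) : X = Y :=
  funext fun i => hM (congrFun h i)

end Cancel

variable {K : Type*} [Field K] {m n d : Type*} [Fintype m] [Fintype d] [DecidableEq d]

theorem exists_mul_eq_one_of_mulVec_injective {L : Matrix m d K} (hL : Injective L.mulVec) :
    ∃ P : Matrix d m K, P * L = 1 := by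
  classical
  obtain ⟨g, hg⟩ := (toLin' L).exists_leftInverse_of_injective (LinearMap.ker_eq_bot.mpr hL)
  exact ⟨LinearMap.toMatrix' g, by
    rw [← LinearMap.toMatrix'_toLin' L, ← LinearMap.toMatrix'_comp, hg,
      LinearMap.toMatrix'_id]⟩

theorem exists_mul_eq_of_mul_eq_mul {L L' : Matrix m d K} {M M' : Matrix d n K}
    (hL : Injective L.mulVec) (hM' : Injective M'.vecMul) (h : L * M = L' * M') :
    ∃ G : Matrix d d K, L * G = L' := by
  obtain ⟨P, hP⟩ := exists_mul_eq_one_of_mulVec_injective hL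
  refine ⟨P * L', mul_right_cancel_of_vecMul_injective hM' ?_⟩
  rw [Matrix.mul_assoc, Matrix.mul_assoc, ← h, ← Matrix.mul_assoc P, hP, Matrix.one_mul]

theorem exists_isUnit_mul_eq_of_mul_eq_mul {L L' : Matrix m d K} {M M' : Matrix d n K}
    (hL : Injective L.mulVec) (hL' : Injective L'.mulVec)
    (hM : Injective M.vecMul) (hM' : Injective M'.vecMul) (h : L * M = L' * M') :
    ∃ G : Matrix d d K, IsUnit G ∧ L * G = L' := by
  obtain ⟨G, hG⟩ := exists_mul_eq_of_mul_eq_mul hL hM' h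
  obtain ⟨G', hG'⟩ := exists_mul_eq_of_mul_eq_mul hL' hM h.symm
  have hGG' : G * G' = 1 :=
    mul_left_cancel_of_mulVec_injective hL (by rw [← Matrix.mul_assoc, hG, hG', Matrix.mul_one])
  exact ⟨G, isUnit_iff_exists_inv.mpr ⟨G', hGG'⟩, hG⟩

end Matrix

namespace MPS

variable {N : ℕ} {q : Fin N → ℕ} {D : ℕ → ℕ}

abbrev Param (N : ℕ) (q : Fin N → ℕ) (D : ℕ → ℕ) :=
  (n : Fin N) → Fin (q n) → Matrix (Fin (D n.val)) (Fin (D (n.val + 1))) ℂ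

abbrev Config (q : Fin N → ℕ) := (n : Fin N) → Fin (q n)

def rightProd (A : Param N q D) (s : Config q) (k : ℕ) (h : k ≤ N) :
    Matrix (Fin (D k)) (Fin (D N)) ℂ :=
  if hk : k < N then A ⟨k, hk⟩ (s ⟨k, hk⟩) * rightProd A s (k + 1) hk
  else (1 : Matrix (Fin (D N)) (Fin (D N)) ℂ).submatrix
    (Fin.cast (congrArg D (le_antisymm h (not_lt.mp hk)))) id
termination_by N - k

def splice (k : ℕ) (s t : Config q) : Config q := fun n => if n.val < k then s n else t n

section Products

variable (A : Param N q D)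

theorem rightProd_of_lt (s : Config q) {k : ℕ} (hk : k < N) :
    rightProd A s k hk.le = A ⟨k, hk⟩ (s ⟨k, hk⟩) * rightProd A s (k + 1) hk := by
  rw [rightProd, dif_pos hk]

theorem rightProd_last (s : Config q) : rightProd A s N le_rfl = 1 := by
  rw [rightProd, dif_neg (lt_irrefl N)]
  rfl

theorem prodAux_congr {s t : Config q} (k : ℕ) (h : k ≤ N)
    (hst : ∀ n : Fin N, n.val < k → s n = t n) : prodAux A s k h = prodAux A t k h := by
  induction k with
  | zero => rfl
  | succ k ih =>
    rw [prodAux, prodAux, ih (Nat.le_of_succ_le h) fun n hn => hst n (by omega),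
      hst ⟨k, h⟩ (by simp)]

theorem rightProd_congr {s t : Config q} (k : ℕ) (h : k ≤ N)
    (hst : ∀ n : Fin N, k ≤ n.val → s n = t n) : rightProd A s k h = rightProd A t k h := by
  rw [rightProd, rightProd]
  split_ifs with hk
  · rw [hst ⟨k, hk⟩ le_rfl, rightProd_congr (k + 1) hk fun n hn => hst n (by omega)]
  · rfl
termination_by N - k

theorem prodAux_mul_rightProd (s : Config q) (k : ℕ) (h : k ≤ N) :
    prodAux A s k h * rightProd A s k h = prodAux A s N le_rfl := by
  rw [rightProd]
  split_ifs with hk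
  · rw [← Matrix.mul_assoc]
    exact prodAux_mul_rightProd s (k + 1) hk
  · obtain rfl : k = N := le_antisymm h (not_lt.mp hk)
    exact Matrix.mul_one _
termination_by N - k

theorem prodAux_mul_rightProd_splice (s t : Config q) (k : ℕ) (h : k ≤ N) :
    prodAux A s k h * rightProd A t k h = prodAux A (splice k s t) N le_rfl := by
  rw [← prodAux_mul_rightProd A (splice k s t) k h,
    prodAux_congr A k h (s := splice k s t) (t := s) fun n hn => if_pos hn,
    rightProd_congr A k h (s := splice k s t) (t := t) fun n hn => if_neg (not_lt.mpr hn)]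

theorem prodAux_update {k : ℕ} (h : k < N) (s : Config q) (σ : Fin (q ⟨k, h⟩)) :
    prodAux A (update s ⟨k, h⟩ σ) (k + 1) h = prodAux A s k h.le * A ⟨k, h⟩ σ := by
  rw [prodAux, update_self,
    prodAux_congr A k h.le fun n hn => update_of_ne (Fin.ne_of_lt hn) σ s]

theorem rightProd_update {k : ℕ} (h : k < N) (s : Config q) (σ : Fin (q ⟨k, h⟩)) :
    rightProd A (update s ⟨k, h⟩ σ) k h.le = A ⟨k, h⟩ σ * rightProd A s (k + 1) h := by
  rw [rightProd_of_lt, update_self,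
    rightProd_congr A (k + 1) h fun n hn => update_of_ne (Fin.ne_of_gt hn) σ s]

theorem rAux_congr {j j' : ℕ} (e : j = j') (h : j ≤ N) (h' : j' ≤ N) :
    rAux A j h = (rAux A j' h').submatrix (Fin.cast (by rw [e])) (Fin.cast (by rw [e])) := by
  subst e
  rfl

theorem rMat_of_lt {k : ℕ} (hk : k < N) :
    rMat A k hk.le = ∑ σ, A ⟨k, hk⟩ σ * rMat A (k + 1) hk * (A ⟨k, hk⟩ σ)ᴴ := by
  obtain ⟨j, rfl, hj⟩ : ∃ j, k = N - (j + 1) ∧ j + 1 ≤ N :=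
    ⟨N - (k + 1), by omega, by omega⟩
  rw [rMat, rMat, rAux_congr A (show N - (N - (j + 1)) = j + 1 by omega) _ (by omega), rAux,
    rAux_congr A (show N - (N - (j + 1) + 1) = j by omega) _ (by omega)]
  simp only [Matrix.submatrix_submatrix]
  rfl

end Products

section FullRank

variable {A : Param N q D}

theorem lMat_eq_zero_of_lt {n : Fin N} (hq : q n = 0) {m : ℕ} (hnm : n.val < m) :
    ∀ hm : m ≤ N, lMat A m hm = 0 := by
  induction m, hnm using Nat.le_induction with
  | base =>
    intro hm
    have : IsEmpty (Fin (q ⟨n.val, hm⟩)) := by rw [Fin.eta, hq]; infer_instance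
    exact Finset.sum_of_isEmpty _
  | succ m _ ih =>
    intro hm
    simp [lMat, ih (Nat.le_of_succ_le hm)]

theorem FullRank.nonempty_config (hA : FullRank A) (hN : D N = 1) : Nonempty (Config q) := by
  refine Classical.nonempty_pi.mpr fun n =>
    Fin.pos_iff_nonempty.mp (Nat.pos_of_ne_zero fun hq => ?_)
  have hpos := (hA N le_rfl).1
  rw [lMat_eq_zero_of_lt hq n.isLt le_rfl] at hpos
  have : Nonempty (Fin (D N)) := by rw [hN]; infer_instance
  simpa using hpos.det_pos

def leftProdStack (A : Param N q D) (k : ℕ) (h : k ≤ N) :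
    Matrix (Config q × Fin (D 0)) (Fin (D k)) ℂ :=
  Matrix.of fun p => prodAux A p.1 k h p.2

def rightProdStack (A : Param N q D) (k : ℕ) (h : k ≤ N) :
    Matrix (Fin (D k)) (Config q × Fin (D N)) ℂ :=
  Matrix.of fun i p => rightProd A p.1 k h i p.2

theorem leftProdStack_mulVec_injective [Nonempty (Config q)] (hA : ∀ k h, (lMat A k h).PosDef)
    (k : ℕ) (h : k ≤ N) : Injective (leftProdStack A k h).mulVec := by
  induction k with
  | zero =>
    intro v w hvw
    obtain ⟨s⟩ := ‹Nonempty (Config q)›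
    funext i
    have hs := congrFun hvw (s, i)
    change (1 *ᵥ v) i = (1 *ᵥ w) i at hs
    rwa [Matrix.one_mulVec, Matrix.one_mulVec] at hs
  | succ k ih =>
    intro v w hvw
    have hσ : ∀ σ, A ⟨k, h⟩ σ *ᵥ v = A ⟨k, h⟩ σ *ᵥ w := fun σ =>
      ih (Nat.le_of_succ_le h) <| funext fun ⟨s, i⟩ => by
        have hs := congrFun hvw (update s ⟨k, h⟩ σ, i)
        change (prodAux A _ (k + 1) h *ᵥ v) i = (prodAux A _ (k + 1) h *ᵥ w) i at hs
        rwa [prodAux_update, ← Matrix.mulVec_mulVec, ← Matrix.mulVec_mulVec] at hs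
    apply mulVec_injective_iff_isUnit.mpr (hA (k + 1) h).isUnit
    simp only [lMat, Matrix.sum_mulVec, ← Matrix.mulVec_mulVec, hσ]

theorem rightProdStack_vecMul_injective [Nonempty (Config q)] (hA : ∀ k h, (rMat A k h).PosDef)
    (k : ℕ) (h : k ≤ N) : Injective (rightProdStack A k h).vecMul := by
  intro v w hvw
  by_cases hk : k < N
  · have hσ : ∀ σ, v ᵥ* A ⟨k, hk⟩ σ = w ᵥ* A ⟨k, hk⟩ σ := fun σ =>
      rightProdStack_vecMul_injective hA (k + 1) hk <| funext fun ⟨t, j⟩ => by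
        have ht := congrFun hvw (update t ⟨k, hk⟩ σ, j)
        change (v ᵥ* rightProd A _ k hk.le) j = (w ᵥ* rightProd A _ k hk.le) j at ht
        rwa [rightProd_update, ← Matrix.vecMul_vecMul, ← Matrix.vecMul_vecMul] at ht
    apply vecMul_injective_iff_isUnit.mpr (hA k h).isUnit
    simp only [rMat_of_lt A hk, Matrix.vecMul_sum, ← Matrix.vecMul_vecMul, hσ]
  · obtain rfl : N = k := le_antisymm (not_lt.mp hk) h
    obtain ⟨t⟩ := ‹Nonempty (Config q)›
    funext j
    have ht := congrFun hvw (t, j)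
    change (v ᵥ* rightProd A t N le_rfl) j = (w ᵥ* rightProd A t N le_rfl) j at ht
    rwa [rightProd_last, Matrix.vecMul_one, Matrix.vecMul_one] at ht
termination_by N - k

theorem leftProdStack_mul_eq_iff {ι : Type*} {A B : Param N q D} {k : ℕ} {h : k ≤ N}
    {X Y : Matrix (Fin (D k)) ι ℂ} :
    leftProdStack A k h * X = leftProdStack B k h * Y ↔
      ∀ s, prodAux A s k h * X = prodAux B s k h * Y :=
  ⟨fun H s => funext fun i => congrFun H (s, i), fun H => funext fun p => congrFun (H p.1) p.2⟩

theorem eq_of_forall_prodAux_mul_eq [Nonempty (Config q)] (hA : ∀ k h, (lMat A k h).PosDef)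
    {ι : Type*} {k : ℕ} {h : k ≤ N} {X Y : Matrix (Fin (D k)) ι ℂ}
    (H : ∀ s, prodAux A s k h * X = prodAux A s k h * Y) : X = Y :=
  Matrix.mul_left_cancel_of_mulVec_injective (leftProdStack_mulVec_injective hA k h)
    (leftProdStack_mul_eq_iff.mpr H)

end FullRank

section Gauge

variable {A A' : Param N q D}

theorem prodAux_last_eq_of_psi_eq (h0 : D 0 = 1) (hN : D N = 1)
    (hpsi : psi (hN.trans h0.symm) A = psi (hN.trans h0.symm) A') (s : Config q) :
    prodAux A s N le_rfl = prodAux A' s N le_rfl := by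
  have : Subsingleton (Fin (D 0)) := by rw [h0]; infer_instance
  have : Subsingleton (Fin (D N)) := by rw [hN]; infer_instance
  ext i j
  have hs := congrFun hpsi s
  simp only [psi, Matrix.trace, Matrix.diag, Matrix.submatrix_apply, id,
    Fintype.sum_subsingleton _ i] at hs
  rwa [Subsingleton.elim j (Fin.cast _ i)]

theorem leftProdStack_mul_rightProdStack_eq (h0 : D 0 = 1) (hN : D N = 1)
    (hpsi : psi (hN.trans h0.symm) A = psi (hN.trans h0.symm) A') (k : ℕ) (h : k ≤ N) :
    leftProdStack A k h * rightProdStack A k h = leftProdStack A' k h * rightProdStack A' k h := by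
  ext ⟨s, i⟩ ⟨t, j⟩
  change (prodAux A s k h * rightProd A t k h) i j = (prodAux A' s k h * rightProd A' t k h) i j
  rw [prodAux_mul_rightProd_splice, prodAux_mul_rightProd_splice,
    prodAux_last_eq_of_psi_eq h0 hN hpsi]

theorem exists_isUnit_prodAux_mul_eq (h0 : D 0 = 1) (hN : D N = 1)
    (hA : FullRank A) (hA' : FullRank A')
    (hpsi : psi (hN.trans h0.symm) A = psi (hN.trans h0.symm) A') (k : ℕ) (h : k ≤ N) :
    ∃ G : Matrix (Fin (D k)) (Fin (D k)) ℂ,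
      IsUnit G ∧ ∀ s, prodAux A s k h * G = prodAux A' s k h := by
  have := hA.nonempty_config hN
  obtain ⟨G, hG, hLG⟩ := Matrix.exists_isUnit_mul_eq_of_mul_eq_mul
    (leftProdStack_mulVec_injective (fun k h => (hA k h).1) k h)
    (leftProdStack_mulVec_injective (fun k h => (hA' k h).1) k h)
    (rightProdStack_vecMul_injective (fun k h => (hA k h).2) k h)
    (rightProdStack_vecMul_injective (fun k h => (hA' k h).2) k h)
    (leftProdStack_mul_rightProdStack_eq h0 hN hpsi k h)
  refine ⟨G, hG, fun s => ?_⟩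
  simpa using leftProdStack_mul_eq_iff.mp (hLG.trans (Matrix.mul_one _).symm) s

theorem eq_one_of_prodAux_mul_eq [Nonempty (Config q)] (hA : ∀ k h, (lMat A k h).PosDef)
    {k : ℕ} {h : k ≤ N} {G : Matrix (Fin (D k)) (Fin (D k)) ℂ}
    (hG : ∀ s, prodAux A s k h * G = prodAux A' s k h)
    (hAA' : ∀ s, prodAux A s k h = prodAux A' s k h) : G = 1 :=
  eq_of_forall_prodAux_mul_eq hA fun s => by rw [hG, ← hAA', Matrix.mul_one]

theorem gauge_mul_eq_mul_gauge [Nonempty (Config q)] (hA : ∀ k h, (lMat A k h).PosDef)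
    (n : Fin N) {G : Matrix (Fin (D n)) (Fin (D n)) ℂ}
    {G' : Matrix (Fin (D (n + 1))) (Fin (D (n + 1))) ℂ}
    (hG : ∀ s, prodAux A s n n.isLt.le * G = prodAux A' s n n.isLt.le)
    (hG' : ∀ s, prodAux A s (n + 1) n.isLt * G' = prodAux A' s (n + 1) n.isLt)
    (σ : Fin (q n)) : G * A' n σ = A n σ * G' := by
  refine eq_of_forall_prodAux_mul_eq hA (h := n.isLt.le) fun s => ?_
  calc prodAux A s n _ * (G * A' n σ) = prodAux A' s n n.isLt.le * A' n σ := by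
        rw [← Matrix.mul_assoc, hG]
    _ = prodAux A' (update s n σ) (n + 1) n.isLt := (prodAux_update A' n.isLt s σ).symm
    _ = prodAux A (update s n σ) (n + 1) n.isLt * G' := (hG' _).symm
    _ = prodAux A s n _ * (A n σ * G') := by
        rw [prodAux_update A n.isLt s σ, Matrix.mul_assoc]

end Gauge

end MPS

/-- **A full-rank MPS with open boundary conditions determines its parameters uniquely up
to gauge:** if `A`, `A'` are full rank and `Ψ[A] = Ψ[A']`, then there are invertible
matrices `G n` (with `G 0 = 1` and `G N = 1`) such that
`(A')^s(n) = G(n-1)⁻¹ A^s(n) G(n)` for all sites `n` and physical indices `s`. -/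
theorem mps_unique_up_to_gauge (N : ℕ) (q : Fin N → ℕ) (D : ℕ → ℕ)
    (h0 : D 0 = 1) (hN : D N = 1)
    (A A' : (n : Fin N) → Fin (q n) → Matrix (Fin (D n.val)) (Fin (D (n.val + 1))) ℂ)
    (hA : MPS.FullRank A) (hA' : MPS.FullRank A')
    (hpsi : MPS.psi (hN.trans h0.symm) A = MPS.psi (hN.trans h0.symm) A') :
    ∃ G : (n : ℕ) → Matrix (Fin (D n)) (Fin (D n)) ℂ,
      G 0 = 1 ∧ G N = 1 ∧ (∀ n, n ≤ N → IsUnit (G n)) ∧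
      ∀ (n : Fin N) (s : Fin (q n)), A' n s = (G n.val)⁻¹ * A n s * G (n.val + 1) := by
  have := hA.nonempty_config hN
  have hl : ∀ k h, (MPS.lMat A k h).PosDef := fun k h => (hA k h).1
  choose G hunit hG using MPS.exists_isUnit_prodAux_mul_eq h0 hN hA hA' hpsi
  refine ⟨fun n => if h : n ≤ N then G n h else 1, ?_, ?_, fun n hn => ?_, fun n σ => ?_⟩
  · dsimp only
    rw [dif_pos N.zero_le]
    exact MPS.eq_one_of_prodAux_mul_eq hl (hG 0 _) fun s => rfl
  · dsimp only
    rw [dif_pos le_rfl]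
    exact MPS.eq_one_of_prodAux_mul_eq hl (hG N _) (MPS.prodAux_last_eq_of_psi_eq h0 hN hpsi)
  · simpa [hn] using hunit n hn
  · dsimp only
    rw [dif_pos n.isLt.le, dif_pos (Nat.succ_le_of_lt n.isLt), Matrix.mul_assoc,
      ← MPS.gauge_mul_eq_mul_gauge hl n (hG _ _) (hG _ _) σ, ← Matrix.mul_assoc,
      Matrix.nonsing_inv_mul _ ((Matrix.isUnit_iff_isUnit_det _).mp (hunit _ _)), Matrix.one_mul]
end
end

section
/- The left principal connection reproduces the gauge algebra: let A be a full-rank MPS parameter, let x(n) ∈ ℂ^{D_n×D_n} for n = 0,…,N with x(0) = 0 and x(N) = 0, and set B^s(n) = A^s(n)·x(n) − x(n−1)·A^s(n). Define recursively y(0) = 0 and y(n) = Σ_s A^s(n)† y(n−1) A^s(n) + Σ_s A^s(n)† l(n−1) B^s(n). Then for every n = 1,…,N−1 one has y(n) = l(n)·x(n), and hence the left connection ω^{(L)}_A(B)(n) := l(n)^{-1}·y(n) satisfies ω^{(L)}_A(B)(n) = x(n). -/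
open Matrix
open scoped ComplexOrder

noncomputable section

namespace MPS

variable {N : ℕ} {q : Fin N → ℕ} {D : ℕ → ℕ}

/-- The recursively defined family `y`: `y 0 = 0`,
`y (n+1) = Σ_s A^s(n)† y(n) A^s(n) + Σ_s A^s(n)† l(n) B^s(n)`. -/
def yMat (A B : (n : Fin N) → Fin (q n) → Matrix (Fin (D n.val)) (Fin (D (n.val + 1))) ℂ) :
    (k : ℕ) → k ≤ N → Matrix (Fin (D k)) (Fin (D k)) ℂ
  | 0, _ => 0
  | k + 1, h =>
      (∑ s : Fin (q ⟨k, h⟩),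
        (A ⟨k, h⟩ s)ᴴ * yMat A B k (Nat.le_of_succ_le h) * A ⟨k, h⟩ s) +
      (∑ s : Fin (q ⟨k, h⟩),
        (A ⟨k, h⟩ s)ᴴ * lMat A k (Nat.le_of_succ_le h) * B ⟨k, h⟩ s)

/-- The left principal connection `ω^{(L)}_A(B)(n) = l(n)⁻¹ · y(n)`. -/
def omegaL (A B : (n : Fin N) → Fin (q n) → Matrix (Fin (D n.val)) (Fin (D (n.val + 1))) ℂ)
    (n : ℕ) (h : n ≤ N) : Matrix (Fin (D n)) (Fin (D n)) ℂ :=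
  (lMat A n h)⁻¹ * yMat A B n h

end MPS

/-!
Substituting `B^s(n) = A^s(n) x(n) − x(n−1) A^s(n)` into the recursion for `y`, the term
`Σ_s A^s(n)† l(n−1) x(n−1) A^s(n)` coming from the induction hypothesis `y(n−1) = l(n−1) x(n−1)`
cancels against the gauge term, leaving `Σ_s A^s(n)† l(n−1) A^s(n) x(n) = l(n) x(n)`.
Full rank makes `l(n)` invertible, so `l(n)⁻¹ y(n) = x(n)`.
-/

namespace MPS

variable {N : ℕ} {q : Fin N → ℕ} {D : ℕ → ℕ}

def gaugeDirection (A : (n : Fin N) → Fin (q n) → Matrix (Fin (D n.val)) (Fin (D (n.val + 1))) ℂ)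
    (x : (k : ℕ) → Matrix (Fin (D k)) (Fin (D k)) ℂ) :
    (n : Fin N) → Fin (q n) → Matrix (Fin (D n.val)) (Fin (D (n.val + 1))) ℂ :=
  fun m s => A m s * x (m.val + 1) - x m.val * A m s

theorem yMat_gaugeDirection
    (A : (n : Fin N) → Fin (q n) → Matrix (Fin (D n.val)) (Fin (D (n.val + 1))) ℂ)
    {x : (k : ℕ) → Matrix (Fin (D k)) (Fin (D k)) ℂ} (hx0 : x 0 = 0) :
    ∀ (k : ℕ) (h : k ≤ N), yMat A (gaugeDirection A x) k h = lMat A k h * x k := by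
  intro k
  induction k with
  | zero => intro h; simp [yMat, lMat, hx0]
  | succ k ih =>
    intro h
    rw [yMat, lMat, ih (Nat.le_of_succ_le h), ← Finset.sum_add_distrib, Finset.sum_mul]
    refine Finset.sum_congr rfl fun s _ => ?_
    simp only [gaugeDirection, Matrix.mul_sub, Matrix.mul_assoc]
    exact add_sub_cancel _ _

theorem omegaL_eq_of_yMat_eq_mul
    {A B : (n : Fin N) → Fin (q n) → Matrix (Fin (D n.val)) (Fin (D (n.val + 1))) ℂ}
    {n : ℕ} {h : n ≤ N} {z : Matrix (Fin (D n)) (Fin (D n)) ℂ}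
    (hl : (lMat A n h).PosDef) (hy : yMat A B n h = lMat A n h * z) :
    omegaL A B n h = z := by
  have := hl.isUnit.invertible
  rw [omegaL, hy, Matrix.inv_mul_cancel_left_of_invertible]

end MPS

/-- **The left principal connection reproduces the gauge algebra:** for a full-rank MPS
parameter `A` and a vertical tangent direction `B^s(n) = A^s(n) x(n) − x(n−1) A^s(n)`
(with `x 0 = x N = 0`), one has `y(n) = l(n)·x(n)` and hence
`ω^{(L)}_A(B)(n) = l(n)⁻¹ y(n) = x(n)` for every `n = 1, …, N−1`. -/
theorem mps_connection_reproduces_gauge_algebra (N : ℕ) (q : Fin N → ℕ) (D : ℕ → ℕ)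
    (A : (n : Fin N) → Fin (q n) → Matrix (Fin (D n.val)) (Fin (D (n.val + 1))) ℂ)
    (hA : MPS.FullRank A)
    (x : (k : ℕ) → Matrix (Fin (D k)) (Fin (D k)) ℂ) (hx0 : x 0 = 0) :
    ∀ (n : ℕ) (h1 : 1 ≤ n) (h2 : n ≤ N - 1),
      MPS.yMat A (fun m s => A m s * x (m.val + 1) - x m.val * A m s) n (by omega)
          = MPS.lMat A n (by omega) * x n ∧
      MPS.omegaL A (fun m s => A m s * x (m.val + 1) - x m.val * A m s) n (by omega)
          = x n := by
  intro n _ _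
  have hy := MPS.yMat_gaugeDirection A hx0 n (by omega)
  exact ⟨hy, MPS.omegaL_eq_of_yMat_eq_mul (hA n (by omega)).1 hy⟩
end
end

section
/- Every tangent parameter has a unique left-gauge-fixed representative in its additive gauge orbit: let A be a full-rank MPS parameter with open boundary conditions. For every tangent parameter B̃, there exists a unique family x = (x(1),…,x(N−1)) of complex D_n×D_n matrices (with x(0) = x(N) = 0) such that the tangent parameter B defined by B^s(n) = B̃^s(n) + A^s(n)·x(n) − x(n−1)·A^s(n) satisfies the left gauge-fixing conditions Σ_{s=1}^{q_n} A^s(n)† l(n−1) B^s(n) = 0 for all n = 1,…,N−1. -/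
open Matrix
open scoped ComplexOrder

noncomputable section

/-!
Writing `l = lMat A` and indexing sites from `0`, the `n`-th gauge condition reads
`l(n+1) x(n+1) + R_n(x(n)) = 0`, where `R_n(x(n))` is the condition evaluated at `x(n+1) = 0`:
the term `Σ_s A^s(n)† l(n) A^s(n) x(n+1)` is exactly `l(n+1) x(n+1)`. Since `l(n+1)` is
invertible, the conditions are a forward recursion `x(n+1) = -l(n+1)⁻¹ R_n(x(n))` starting
from `x(0) = 0`, which determines `x(1), …, x(N-1)`; `x(N)` enters no condition.
-/

namespace MPS

variable {N : ℕ} {q : Fin N → ℕ} {D : ℕ → ℕ}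
  (A Bt : (n : Fin N) → Fin (q n) → Matrix (Fin (D n.val)) (Fin (D (n.val + 1))) ℂ)

def gaugeResidual (n : Fin N) (x₀ : Matrix (Fin (D n.val)) (Fin (D n.val)) ℂ)
    (x₁ : Matrix (Fin (D (n.val + 1))) (Fin (D (n.val + 1))) ℂ) :
    Matrix (Fin (D (n.val + 1))) (Fin (D (n.val + 1))) ℂ :=
  ∑ s : Fin (q n), (A n s)ᴴ * lMat A n.val n.isLt.le * (Bt n s + A n s * x₁ - x₀ * A n s)

lemma gaugeResidual_eq_lMat_mul_add (n : Fin N)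
    (x₀ : Matrix (Fin (D n.val)) (Fin (D n.val)) ℂ)
    (x₁ : Matrix (Fin (D (n.val + 1))) (Fin (D (n.val + 1))) ℂ) :
    gaugeResidual A Bt n x₀ x₁ = lMat A (n.val + 1) n.isLt * x₁ + gaugeResidual A Bt n x₀ 0 := by
  simp only [gaugeResidual, lMat, Matrix.mul_zero, add_zero, Finset.sum_mul,
    ← Finset.sum_add_distrib, Matrix.mul_assoc, ← Matrix.mul_add]
  congr! 3
  abel

lemma gaugeResidual_eq_zero_iff {n : Fin N} (hl : IsUnit (lMat A (n.val + 1) n.isLt))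
    (x₀ : Matrix (Fin (D n.val)) (Fin (D n.val)) ℂ)
    (x₁ : Matrix (Fin (D (n.val + 1))) (Fin (D (n.val + 1))) ℂ) :
    gaugeResidual A Bt n x₀ x₁ = 0 ↔
      x₁ = (lMat A (n.val + 1) n.isLt)⁻¹ * -gaugeResidual A Bt n x₀ 0 := by
  let _ := hl.invertible
  rw [gaugeResidual_eq_lMat_mul_add, add_eq_zero_iff_eq_neg, eq_comm (a := x₁),
    inv_mul_eq_iff_eq_mul_of_invertible, eq_comm]

def gaugeFix : (k : ℕ) → Matrix (Fin (D k)) (Fin (D k)) ℂ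
  | 0 => 0
  | k + 1 =>
    if h : k + 1 < N then
      (lMat A (k + 1) h.le)⁻¹ * -gaugeResidual A Bt ⟨k, by omega⟩ (gaugeFix k) 0
    else 0

lemma gaugeFix_succ {k : ℕ} (h : k + 1 < N) :
    gaugeFix A Bt (k + 1) =
      (lMat A (k + 1) h.le)⁻¹ * -gaugeResidual A Bt ⟨k, by omega⟩ (gaugeFix A Bt k) 0 := by
  rw [gaugeFix, dif_pos h]

lemma gaugeFix_of_le {k : ℕ} (h : N ≤ k) : gaugeFix A Bt k = 0 := by
  cases k with
  | zero => rfl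
  | succ k => rw [gaugeFix, dif_neg (by omega)]

end MPS

theorem mps_left_gauge_fixing_exists_unique_general (N : ℕ) (q : Fin N → ℕ) (D : ℕ → ℕ)
    (A Bt : (n : Fin N) → Fin (q n) → Matrix (Fin (D n.val)) (Fin (D (n.val + 1))) ℂ)
    (hA : MPS.FullRank A) :
    ∃ x : (k : ℕ) → Matrix (Fin (D k)) (Fin (D k)) ℂ,
      (x 0 = 0 ∧ x N = 0 ∧
        ∀ (n : Fin N), n.val + 1 < N →
          ∑ s : Fin (q n),
            (A n s)ᴴ * MPS.lMat A n.val n.isLt.le *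
              (Bt n s + A n s * x (n.val + 1) - x n.val * A n s) = 0) ∧
      ∀ x' : (k : ℕ) → Matrix (Fin (D k)) (Fin (D k)) ℂ,
        (x' 0 = 0 ∧ x' N = 0 ∧
          ∀ (n : Fin N), n.val + 1 < N →
            ∑ s : Fin (q n),
              (A n s)ᴴ * MPS.lMat A n.val n.isLt.le *
                (Bt n s + A n s * x' (n.val + 1) - x' n.val * A n s) = 0) →
        ∀ k, k ≤ N → x' k = x k := by
  have hl : ∀ n : Fin N, IsUnit (MPS.lMat A (n.val + 1) n.isLt) :=
    fun n ↦ (hA _ _).1.isUnit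
  refine ⟨MPS.gaugeFix A Bt, ⟨rfl, MPS.gaugeFix_of_le A Bt le_rfl, fun n hn ↦ ?_⟩, ?_⟩
  · exact (MPS.gaugeResidual_eq_zero_iff A Bt (hl n) _ _).2 (MPS.gaugeFix_succ A Bt hn)
  · rintro x' ⟨hx'0, hx'N, hx'⟩ k
    induction k with
    | zero => exact fun _ ↦ hx'0
    | succ k ih =>
      intro hk
      rcases hk.lt_or_eq with hk | rfl
      · rw [(MPS.gaugeResidual_eq_zero_iff A Bt (hl ⟨k, _⟩) _ _).1 (hx' ⟨k, _⟩ hk),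
          ih (by omega), MPS.gaugeFix_succ A Bt hk]
      · rw [hx'N, MPS.gaugeFix_of_le A Bt le_rfl]

/-- **Existence and uniqueness of the left-gauge-fixed representative:** for a full-rank
MPS parameter `A` and every tangent parameter `B̃`, there is a family `x` (with
`x 0 = 0`, `x N = 0`), unique on `0, …, N`, such that
`B^s(n) = B̃^s(n) + A^s(n) x(n) − x(n−1) A^s(n)` satisfies the left gauge-fixing
conditions `Σ_s A^s(n)† l(n−1) B^s(n) = 0` for all `n = 1, …, N−1`. -/
theorem mps_left_gauge_fixing_exists_unique (N : ℕ) (q : Fin N → ℕ) (D : ℕ → ℕ)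
    (h0 : D 0 = 1) (hN : D N = 1)
    (A Bt : (n : Fin N) → Fin (q n) → Matrix (Fin (D n.val)) (Fin (D (n.val + 1))) ℂ)
    (hA : MPS.FullRank A) :
    ∃ x : (k : ℕ) → Matrix (Fin (D k)) (Fin (D k)) ℂ,
      (x 0 = 0 ∧ x N = 0 ∧
        ∀ (n : Fin N), n.val + 1 < N →
          ∑ s : Fin (q n),
            (A n s)ᴴ * MPS.lMat A n.val n.isLt.le *
              (Bt n s + A n s * x (n.val + 1) - x n.val * A n s) = 0) ∧
      ∀ x' : (k : ℕ) → Matrix (Fin (D k)) (Fin (D k)) ℂ,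
        (x' 0 = 0 ∧ x' N = 0 ∧
          ∀ (n : Fin N), n.val + 1 < N →
            ∑ s : Fin (q n),
              (A n s)ᴴ * MPS.lMat A n.val n.isLt.le *
                (Bt n s + A n s * x' (n.val + 1) - x' n.val * A n s) = 0) →
        ∀ k, k ≤ N → x' k = x k :=
  mps_left_gauge_fixing_exists_unique_general N q D A Bt hA
end
end

section
/- Under left gauge fixing the overlap of MPS tangent vectors becomes a sum of local terms: let A be an MPS parameter with open boundary conditions and let B and B' be tangent parameters that both satisfy the left gauge-fixing conditions Σ_s A^s(n)† l(n−1) B^s(n) = 0 and Σ_s A^s(n)† l(n−1) (B')^s(n) = 0 for all n = 1,…,N−1. Then ⟨Φ[B; A], Φ[B'; A]⟩ = Σ_{n=1}^N tr[(Σ_{s=1}^{q_n} B^s(n)† l(n−1) (B')^s(n))·r(n)], where the inner product on ⊗_{n=1}^N ℂ^{q_n} is conjugate-linear in the first argument. -/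
/-! Expanding both tangent vectors turns the overlap into a double sum, over the sites `n` and `m`
carrying `B` and `B'`, of overlaps of two MPS. Such an overlap is the trace of a mixed left density
matrix, built by the recursion of `l` with the two parameters on the bra and ket sides. For
`n ≠ m` this matrix vanishes right after the first site where the two parameters differ, by the
gauge condition there (an adjoint of it when `n < m`, using `l† = l`). For `n = m` the sites after
`n` carry `A` on both sides, and contracting them produces `r(n)`. -/

open Matrix
open scoped ComplexOrder

noncomputable section

namespace MPS

variable {N : ℕ} {q : Fin N → ℕ} {D : ℕ → ℕ}

/-- The MPS tangent vector `Φ[B; A]`, whose coefficient on the basis vector indexed by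
`s` is `Σ_{n=1}^N tr[A^{s_1}(1) ⋯ B^{s_n}(n) ⋯ A^{s_N}(N)]`. -/
def phi (hD : D N = D 0)
    (A B : (n : Fin N) → Fin (q n) → Matrix (Fin (D n.val)) (Fin (D (n.val + 1))) ℂ) :
    ((n : Fin N) → Fin (q n)) → ℂ :=
  fun s => ∑ n : Fin N, psi hD (Function.update A n (B n)) s

end MPS
theorem card_nsmul_sum_eq_sum_sum_update {ι M : Type*} [Fintype ι] [DecidableEq ι]
    {β : ι → Type*} [∀ i, Fintype (β i)] [AddCommMonoid M] (i : ι) (h : (∀ j, β j) → M) :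
    Fintype.card (β i) • ∑ s, h s = ∑ s, ∑ t : β i, h (Function.update s i t) := by
  let σ : Equiv.Perm ((∀ j, β j) × β i) :=
    Function.Involutive.toPerm (fun p => (Function.update p.1 i p.2, p.1 i)) fun p => by simp
  calc Fintype.card (β i) • ∑ s, h s = ∑ p : (∀ j, β j) × β i, h p.1 := by
        simp only [Fintype.sum_prod_type, Finset.sum_const, Finset.card_univ, Finset.smul_sum]
    _ = ∑ p, h (σ p).1 := (Equiv.sum_comp σ _).symm
    _ = ∑ s, ∑ t : β i, h (Function.update s i t) := Fintype.sum_prod_type _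

theorem Matrix.trace_conjTranspose_mul_of_unique {ι κ : Type*} [Fintype ι] [Fintype κ]
    [Unique ι] [Unique κ] (P P' : Matrix ι κ ℂ) :
    (Pᴴ * P').trace = starRingEnd ℂ (P default default) * P' default default := by
  simp [Matrix.trace, Matrix.mul_apply]

namespace MPS

variable {N : ℕ} {q : Fin N → ℕ} {D : ℕ → ℕ}

section LeftDensity

variable (A C C' : (n : Fin N) → Fin (q n) → Matrix (Fin (D n.val)) (Fin (D (n.val + 1))) ℂ)

def lMatMixed : (k : ℕ) → k ≤ N → Matrix (Fin (D k)) (Fin (D k)) ℂ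
  | 0, _ => 1
  | k + 1, h => ∑ s : Fin (q ⟨k, h⟩),
      (C ⟨k, h⟩ s)ᴴ * lMatMixed k (Nat.le_of_succ_le h) * C' ⟨k, h⟩ s

theorem lMatMixed_eq_lMat : ∀ (k : ℕ) (h : k ≤ N),
    (∀ j : Fin N, j.val < k → C j = A j) → (∀ j : Fin N, j.val < k → C' j = A j) →
    lMatMixed C C' k h = lMat A k h
  | 0, _, _, _ => rfl
  | k + 1, h, hC, hC' => by
    rw [lMatMixed, lMat,
      lMatMixed_eq_lMat k (Nat.le_of_succ_le h)
        (fun j hj => hC j (by omega)) (fun j hj => hC' j (by omega)),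
      hC ⟨k, h⟩ (by simp), hC' ⟨k, h⟩ (by simp)]

theorem lMatMixed_succ_eq_sum_lMat (p : Fin N)
    (hC : ∀ j : Fin N, j < p → C j = A j) (hC' : ∀ j : Fin N, j < p → C' j = A j) :
    lMatMixed C C' (p.val + 1) p.isLt
      = ∑ s : Fin (q p), (C p s)ᴴ * lMat A p.val p.isLt.le * C' p s := by
  rw [lMatMixed, lMatMixed_eq_lMat A C C' p.val p.isLt.le (fun j hj => hC j hj)
    (fun j hj => hC' j hj)]

theorem lMatMixed_eq_zero_of_le {k : ℕ} (hk : k ≤ N) (hzero : lMatMixed C C' k hk = 0) :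
    ∀ j (hj : j ≤ N), k ≤ j → lMatMixed C C' j hj = 0 := by
  intro j hj hkj
  induction j, hkj using Nat.le_induction with
  | base => exact hzero
  | succ j hkj ih => simp [lMatMixed, ih (Nat.le_of_succ_le hj)]

theorem lMat_isHermitian : ∀ (k : ℕ) (h : k ≤ N), (lMat A k h).IsHermitian
  | 0, _ => by simp [lMat]
  | k + 1, h => by
    simp only [Matrix.IsHermitian, lMat, Matrix.conjTranspose_sum, Matrix.conjTranspose_mul,
      Matrix.conjTranspose_conjTranspose, (lMat_isHermitian k (Nat.le_of_succ_le h)).eq,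
      Matrix.mul_assoc]

end LeftDensity

section Configurations

variable (C C' : (n : Fin N) → Fin (q n) → Matrix (Fin (D n.val)) (Fin (D (n.val + 1))) ℂ)

theorem prodAux_congr_s10 (s s' : (n : Fin N) → Fin (q n)) :
    ∀ (k : ℕ) (h : k ≤ N), (∀ j : Fin N, j.val < k → s j = s' j) →
    prodAux C s k h = prodAux C s' k h
  | 0, _, _ => rfl
  | k + 1, h, hs => by
    rw [prodAux, prodAux,
      prodAux_congr_s10 s s' k (Nat.le_of_succ_le h) (fun j hj => hs j (by omega)),
      hs ⟨k, h⟩ (by simp)]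

theorem prodAux_update_of_le (s : (n : Fin N) → Fin (q n)) (i : Fin N) (t : Fin (q i))
    {k : ℕ} (h : k ≤ N) (hki : k ≤ i.val) :
    prodAux C (Function.update s i t) k h = prodAux C s k h :=
  prodAux_congr_s10 C _ _ k h fun j hj => Function.update_of_ne (by grind) _ _

/- `prodAux _ s k` only depends on `s` below `k`, so summing it over all configurations counts
each configuration of the first `k` sites `tailCard q k` times. -/
variable (q) in
def tailCard (k : ℕ) : ℕ :=
  ∏ j ∈ Finset.univ.filter (fun j : Fin N => k ≤ j.val), q j

theorem tailCard_zero : tailCard q 0 = Fintype.card ((n : Fin N) → Fin (q n)) := by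
  simp [tailCard, Fintype.card_pi]

theorem tailCard_of_le {k : ℕ} (hk : N ≤ k) : tailCard q k = 1 :=
  Finset.prod_eq_one fun j hj => absurd (Finset.mem_filter.1 hj).2 (by omega)

theorem tailCard_succ (k : ℕ) (hk : k < N) :
    tailCard q k = q ⟨k, hk⟩ * tailCard q (k + 1) := by
  rw [tailCard, tailCard, ← Finset.prod_insert (s := Finset.univ.filter _) (by simp)]
  congr 1
  ext j
  simp only [Finset.mem_filter, Finset.mem_univ, true_and, Finset.mem_insert, Fin.ext_iff]
  omega

theorem sum_conjTranspose_prodAux_mul_prodAux : ∀ (k : ℕ) (h : k ≤ N),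
    ∑ s : (n : Fin N) → Fin (q n), (prodAux C s k h)ᴴ * prodAux C' s k h
      = tailCard q k • lMatMixed C C' k h
  | 0, h => by simp [prodAux, lMatMixed, tailCard_zero]
  | k + 1, h => by
    have hk : k ≤ N := Nat.le_of_succ_le h
    set i : Fin N := ⟨k, h⟩
    obtain hq | hq := (q i).eq_zero_or_pos
    · have : IsEmpty (Fin (q i)) := by rw [hq]; infer_instance
      have : IsEmpty ((n : Fin N) → Fin (q n)) := isEmpty_pi.2 ⟨i, this⟩
      simp [lMatMixed, i]
    -- `Matrix` has no `IsAddTorsionFree` instance, its underlying function type does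
    refine nsmul_right_injective (M := Fin _ → Fin _ → ℂ) hq.ne' ?_
    calc q i • ∑ s, (prodAux C s (k + 1) h)ᴴ * prodAux C' s (k + 1) h
        = ∑ t : Fin (q i),
            (C i t)ᴴ * (∑ s, (prodAux C s k hk)ᴴ * prodAux C' s k hk) * C' i t := by
          have hcount := card_nsmul_sum_eq_sum_sum_update i
            fun s => (prodAux C s (k + 1) h)ᴴ * prodAux C' s (k + 1) h
          rw [Fintype.card_fin] at hcount
          rw [hcount, Finset.sum_comm]
          simp only [prodAux, prodAux_update_of_le C _ i _ _ (le_refl k),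
            prodAux_update_of_le C' _ i _ _ (le_refl k), Function.update_self, i,
            Matrix.conjTranspose_mul, Matrix.sum_mul, Matrix.mul_sum, Matrix.mul_assoc]
      _ = q i • tailCard q (k + 1) • lMatMixed C C' (k + 1) h := by
          rw [sum_conjTranspose_prodAux_mul_prodAux k hk, tailCard_succ k h, mul_nsmul',
            lMatMixed, Finset.smul_sum, Finset.smul_sum]
          simp only [Matrix.mul_smul, Matrix.smul_mul]
          rfl

end Configurations

theorem sum_star_psi_mul_psi (h0 : D 0 = 1) (hN : D N = 1)
    (C C' : (n : Fin N) → Fin (q n) → Matrix (Fin (D n.val)) (Fin (D (n.val + 1))) ℂ) :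
    ∑ s : (n : Fin N) → Fin (q n),
        starRingEnd ℂ (psi (hN.trans h0.symm) C s) * psi (hN.trans h0.symm) C' s
      = (lMatMixed C C' N le_rfl).trace := by
  have hsum := sum_conjTranspose_prodAux_mul_prodAux C C' N le_rfl
  rw [tailCard_of_le le_rfl, one_nsmul] at hsum
  have : Unique (Fin (D 0)) := h0 ▸ Fin.instUnique
  have : Unique (Fin (D N)) := hN ▸ Fin.instUnique
  rw [← hsum, Matrix.trace_sum]
  refine Finset.sum_congr rfl fun s _ => ?_
  rw [Matrix.trace_conjTranspose_mul_of_unique]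
  simp only [psi, Matrix.trace, Matrix.diag, Fintype.sum_unique, Matrix.submatrix_apply, id_eq,
    Unique.eq_default (Fin.cast _ _)]

theorem sum_star_phi_mul_phi (h0 : D 0 = 1) (hN : D N = 1)
    (A B B' : (n : Fin N) → Fin (q n) → Matrix (Fin (D n.val)) (Fin (D (n.val + 1))) ℂ) :
    ∑ s : (n : Fin N) → Fin (q n),
        starRingEnd ℂ (phi (hN.trans h0.symm) A B s) * phi (hN.trans h0.symm) A B' s
      = ∑ n : Fin N, ∑ m : Fin N,
          (lMatMixed (Function.update A n (B n)) (Function.update A m (B' m)) N le_rfl).trace := by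
  simp only [phi, map_sum, Finset.sum_mul_sum, ← sum_star_psi_mul_psi h0 hN]
  rw [Finset.sum_comm]
  exact Finset.sum_congr rfl fun n _ => Finset.sum_comm

section RightDensity

variable (A : (n : Fin N) → Fin (q n) → Matrix (Fin (D n.val)) (Fin (D (n.val + 1))) ℂ)

theorem rAux_eq_submatrix {j j' : ℕ} (e : j = j') (hj : j ≤ N) (hj' : j' ≤ N) :
    rAux A j hj = (rAux A j' hj').submatrix (Fin.cast (by rw [e])) (Fin.cast (by rw [e])) := by
  subst e; rfl

theorem rMat_last : rMat A N le_rfl = 1 := by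
  rw [rMat, rAux_eq_submatrix A (Nat.sub_self N) _ (Nat.zero_le N), rAux]
  ext i j
  simp [Matrix.one_apply, Fin.ext_iff]

theorem sum_mul_submatrix_mul_conjTranspose_eq {a b : ℕ} (hab : a = b) (ha : a < N)
    (hb : b < N) (M : Matrix (Fin (D (b + 1))) (Fin (D (b + 1))) ℂ)
    (e : Fin (D b) → Fin (D a)) (f : Fin (D (a + 1)) → Fin (D (b + 1)))
    (he : ∀ x, (e x).val = x.val) (hf : ∀ x, (f x).val = x.val) :
    (∑ s : Fin (q ⟨a, ha⟩), A ⟨a, ha⟩ s * M.submatrix f f * (A ⟨a, ha⟩ s)ᴴ).submatrix e e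
      = ∑ s : Fin (q ⟨b, hb⟩), A ⟨b, hb⟩ s * M * (A ⟨b, hb⟩ s)ᴴ := by
  subst hab
  obtain rfl : e = id := funext fun x => Fin.ext (he x)
  obtain rfl : f = id := funext fun x => Fin.ext (hf x)
  rfl

theorem rMat_eq_sum (k : ℕ) (hk : k < N) :
    rMat A k hk.le
      = ∑ s : Fin (q ⟨k, hk⟩), A ⟨k, hk⟩ s * rMat A (k + 1) hk * (A ⟨k, hk⟩ s)ᴴ := by
  rw [rMat, rAux_eq_submatrix A (by omega : N - k = N - (k + 1) + 1) _ (by omega), rAux,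
    Matrix.submatrix_submatrix]
  exact sum_mul_submatrix_mul_conjTranspose_eq A (by omega) _ hk (rMat A (k + 1) hk)
    (Fin.cast (congrArg D (by omega))) (Fin.cast (congrArg D (by omega)))
    (fun _ => rfl) (fun _ => rfl)

end RightDensity

theorem trace_lMatMixed_eq_trace_mul_rMat
    (A C C' : (n : Fin N) → Fin (q n) → Matrix (Fin (D n.val)) (Fin (D (n.val + 1))) ℂ)
    {k : ℕ} (hk : k ≤ N)
    (hC : ∀ j : Fin N, k ≤ j.val → C j = A j) (hC' : ∀ j : Fin N, k ≤ j.val → C' j = A j) :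
    (lMatMixed C C' N le_rfl).trace = (lMatMixed C C' k hk * rMat A k hk).trace := by
  induction hk using Nat.decreasingInduction with
  | self => rw [rMat_last, Matrix.mul_one]
  | of_succ k hk ih =>
    rw [ih (fun j hj => hC j (by omega)) (fun j hj => hC' j (by omega)), lMatMixed,
      rMat_eq_sum A k hk, hC ⟨k, hk⟩ le_rfl, hC' ⟨k, hk⟩ le_rfl]
    simp only [Matrix.sum_mul, Matrix.mul_sum, Matrix.trace_sum, Matrix.mul_assoc]
    refine Finset.sum_congr rfl fun t _ => ?_
    rw [Matrix.trace_mul_comm]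
    simp only [Matrix.mul_assoc]

section Update

variable (A : (n : Fin N) → Fin (q n) → Matrix (Fin (D n.val)) (Fin (D (n.val + 1))) ℂ)

theorem lMatMixed_update_succ (n m p : Fin N) (hpn : p ≤ n) (hpm : p ≤ m)
    (X : Fin (q n) → Matrix (Fin (D n.val)) (Fin (D (n.val + 1))) ℂ)
    (Y : Fin (q m) → Matrix (Fin (D m.val)) (Fin (D (m.val + 1))) ℂ) :
    lMatMixed (Function.update A n X) (Function.update A m Y) (p.val + 1) p.isLt
      = ∑ s : Fin (q p), (Function.update A n X p s)ᴴ * lMat A p.val p.isLt.le *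
          Function.update A m Y p s :=
  lMatMixed_succ_eq_sum_lMat A _ _ p
    (fun _ hj => Function.update_of_ne (hj.trans_le hpn).ne _ _)
    (fun _ hj => Function.update_of_ne (hj.trans_le hpm).ne _ _)

theorem trace_lMatMixed_update_self (n : Fin N)
    (X Y : Fin (q n) → Matrix (Fin (D n.val)) (Fin (D (n.val + 1))) ℂ) :
    (lMatMixed (Function.update A n X) (Function.update A n Y) N le_rfl).trace
      = ((∑ s : Fin (q n), (X s)ᴴ * lMat A n.val n.isLt.le * Y s) *
          rMat A (n.val + 1) n.isLt).trace := by
  have hne : ∀ j : Fin N, n.val + 1 ≤ j.val → j ≠ n := by rintro j hj rfl; omega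
  rw [trace_lMatMixed_eq_trace_mul_rMat A _ _ n.isLt
      (fun j hj => Function.update_of_ne (hne j hj) _ _)
      (fun j hj => Function.update_of_ne (hne j hj) _ _),
    lMatMixed_update_succ A n n n le_rfl le_rfl]
  simp only [Function.update_self]

theorem trace_lMatMixed_update_eq_zero_of_ne
    (B B' : (n : Fin N) → Fin (q n) → Matrix (Fin (D n.val)) (Fin (D (n.val + 1))) ℂ)
    (hB : ∀ n : Fin N, n.val + 1 < N →
      ∑ s : Fin (q n), (A n s)ᴴ * lMat A n.val n.isLt.le * B n s = 0)
    (hB' : ∀ n : Fin N, n.val + 1 < N →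
      ∑ s : Fin (q n), (A n s)ᴴ * lMat A n.val n.isLt.le * B' n s = 0)
    {n m : Fin N} (hnm : n ≠ m) :
    (lMatMixed (Function.update A n (B n)) (Function.update A m (B' m)) N le_rfl).trace
      = 0 := by
  suffices ∃ p : Fin N,
      lMatMixed (Function.update A n (B n)) (Function.update A m (B' m)) (p.val + 1) p.isLt
        = 0 by
    obtain ⟨p, hp⟩ := this
    rw [lMatMixed_eq_zero_of_le _ _ p.isLt hp N le_rfl p.isLt, Matrix.trace_zero]
  rcases hnm.lt_or_gt with hlt | hlt
  · refine ⟨n, ?_⟩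
    have hgauge := congrArg Matrix.conjTranspose (hB n (by omega))
    simp only [Matrix.conjTranspose_sum, Matrix.conjTranspose_mul,
      Matrix.conjTranspose_conjTranspose, (lMat_isHermitian A _ _).eq,
      Matrix.conjTranspose_zero, Matrix.mul_assoc] at hgauge
    rw [lMatMixed_update_succ A n m n le_rfl hlt.le]
    simpa only [Function.update_self, Function.update_of_ne hnm, Matrix.mul_assoc] using hgauge
  · refine ⟨m, ?_⟩
    rw [lMatMixed_update_succ A n m m hlt.le le_rfl]
    simpa only [Function.update_self, Function.update_of_ne hnm.symm] using hB' m (by omega)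

end Update

end MPS

/-- **Under left gauge fixing the overlap of MPS tangent vectors is a sum of local
terms:** if `B` and `B'` both satisfy the left gauge-fixing conditions at sites
`n = 1, …, N−1`, then
`⟨Φ[B; A], Φ[B'; A]⟩ = Σ_{n=1}^N tr[(Σ_s B^s(n)† l(n−1) B'^s(n)) · r(n)]`. -/
theorem mps_overlap_of_left_gauge_fixed (N : ℕ) (q : Fin N → ℕ) (D : ℕ → ℕ)
    (h0 : D 0 = 1) (hN : D N = 1)
    (A B B' : (n : Fin N) → Fin (q n) → Matrix (Fin (D n.val)) (Fin (D (n.val + 1))) ℂ)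
    (hB : ∀ n : Fin N, n.val + 1 < N →
      ∑ s : Fin (q n), (A n s)ᴴ * MPS.lMat A n.val n.isLt.le * B n s = 0)
    (hB' : ∀ n : Fin N, n.val + 1 < N →
      ∑ s : Fin (q n), (A n s)ᴴ * MPS.lMat A n.val n.isLt.le * B' n s = 0) :
    ∑ s : (n : Fin N) → Fin (q n),
        (starRingEnd ℂ) (MPS.phi (hN.trans h0.symm) A B s) *
          MPS.phi (hN.trans h0.symm) A B' s
      = ∑ n : Fin N,
          Matrix.trace
            ((∑ s : Fin (q n), (B n s)ᴴ * MPS.lMat A n.val n.isLt.le * B' n s) *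
              MPS.rMat A (n.val + 1) n.isLt) := by
  rw [MPS.sum_star_phi_mul_phi h0 hN]
  refine Finset.sum_congr rfl fun n _ => ?_
  rw [Finset.sum_eq_single n
    (fun m _ hmn => MPS.trace_lMatMixed_update_eq_zero_of_ne A B B' hB hB' (Ne.symm hmn))
    (fun hn => absurd (Finset.mem_univ n) hn)]
  exact MPS.trace_lMatMixed_update_self A n (B n) (B' n)
end
end

section
/- The canonical parameterization of left-gauge-fixed tangent vectors makes the pullback metric the identity: let A be a full-rank MPS parameter, and for each n let V^s_L(n) (s = 1,…,q_n) be complex D_{n−1}×K_n matrices satisfying Σ_s A^s(n)† l(n−1)^{1/2} V^s_L(n) = 0 and Σ_s V^s_L(n)† V^s_L(n) = 1_{K_n}. For families X = (X(n)) and Y = (Y(n)) of complex K_n×D_n matrices define B^s(n) = l(n−1)^{-1/2}·V^s_L(n)·X(n)·r(n)^{-1/2} and C^s(n) = l(n−1)^{-1/2}·V^s_L(n)·Y(n)·r(n)^{-1/2}. Then (i) B satisfies the left gauge-fixing conditions Σ_s A^s(n)† l(n−1) B^s(n) = 0 for all n = 1,…,N, and (ii) ⟨Φ[B; A], Φ[C;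 A]⟩ = Σ_{n=1}^N tr[X(n)† Y(n)]. -/
open Matrix
open scoped ComplexOrder

noncomputable section

/-- The positive semidefinite square root of a positive semidefinite matrix, as defined in
Mathlib of December 2024 (removed from Mathlib since). -/
def Matrix.PosSemidef.sqrt {𝕜 : Type*} [RCLike 𝕜] {n : Type*} [Fintype n] [DecidableEq n]
    {A : Matrix n n 𝕜} (hA : A.PosSemidef) : Matrix n n 𝕜 :=
  hA.1.eigenvectorUnitary.1 * diagonal ((↑) ∘ Real.sqrt ∘ hA.1.eigenvalues) *
    (star hA.1.eigenvectorUnitary : Matrix n n 𝕜)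

/-!
The overlap `⟨Ψ[M], Ψ[M']⟩` of two MPS is the trace of their mixed left environment, obtained
by contracting the sites one at a time. Expanding `⟨Φ[B; A], Φ[C; A]⟩` gives a double sum over
the sites `n`, `m` at which `B` and `C` replace `A`. For `m < n` the environment at site `m + 1` is
already `Σ_s A^s(m)† l(m) C^s(m) = 0` by the gauge condition on `C`, and the case `m > n` follows
by conjugate symmetry from the gauge condition on `B`. A diagonal term contracts to
`tr[(Σ_s B^s(n)† l(n) C^s(n)) r(n+1)]`, and for the canonical parameterization the square roots
cancel against `l` and `r`, so that `Σ_s V^s† V^s = 1` leaves `tr[X(n)† Y(n)]`.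
-/

namespace Matrix

section Sqrt

variable {𝕜 : Type*} [RCLike 𝕜] {n : Type*} [Fintype n] [DecidableEq n]

theorem PosSemidef.sqrt_mul_self {A : Matrix n n 𝕜} (hA : A.PosSemidef) :
    hA.sqrt * hA.sqrt = A := by
  have hU : (star hA.1.eigenvectorUnitary : Matrix n n 𝕜) * hA.1.eigenvectorUnitary = 1 := by
    simp
  conv_rhs => rw [hA.1.spectral_theorem, Unitary.conjStarAlgAut_apply]
  simp only [PosSemidef.sqrt, Matrix.mul_assoc]
  rw [← Matrix.mul_assoc (star _ : Matrix n n 𝕜), hU, Matrix.one_mul,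
    ← Matrix.mul_assoc (diagonal _), diagonal_mul_diagonal]
  congr 3
  funext i
  simp only [Function.comp_apply, ← RCLike.ofReal_mul,
    Real.mul_self_sqrt (hA.eigenvalues_nonneg i)]

theorem PosSemidef.isHermitian_sqrt {A : Matrix n n 𝕜} (hA : A.PosSemidef) :
    hA.sqrt.IsHermitian := by
  simp only [IsHermitian, PosSemidef.sqrt, conjTranspose_mul, diagonal_conjTranspose,
    Matrix.mul_assoc, star_eq_conjTranspose, conjTranspose_conjTranspose]
  congr 3
  funext i
  simp

theorem PosDef.isUnit_det_sqrt {A : Matrix n n 𝕜} (hA : A.PosDef) :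
    IsUnit hA.posSemidef.sqrt.det := by
  refine isUnit_iff_ne_zero.2 fun h => hA.det_pos.ne' ?_
  rw [← hA.posSemidef.sqrt_mul_self, det_mul, h, zero_mul]

end Sqrt

theorem conj_trace_submatrix_mul_trace_submatrix {m n : Type*} [Fintype m] [Fintype n]
    [Unique m] [Unique n] (f : m → n) (P P' : Matrix m n ℂ) :
    starRingEnd ℂ (trace (P.submatrix id f)) * trace (P'.submatrix id f) = trace (Pᴴ * P') := by
  have hf : f default = default := Subsingleton.elim _ _
  simp only [trace, diag_apply, Fintype.sum_unique, submatrix_apply, id, hf, mul_apply,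
    conjTranspose_apply, Complex.star_def]

theorem trace_submatrix_finCast_mul {d d' : ℕ} (e : d = d') (X : Matrix (Fin d') (Fin d') ℂ)
    (Y : Matrix (Fin d) (Fin d) ℂ) :
    trace (X.submatrix (Fin.cast e) (Fin.cast e) * Y) =
      trace (X * Y.submatrix (Fin.cast e.symm) (Fin.cast e.symm)) := by
  subst e
  simp only [Fin.cast_refl, submatrix_id_id]

theorem sum_conjTranspose_mul_mul_self_mul_inv_eq_zero {ι m n p r o : Type*} [Fintype ι]
    [Fintype m] [DecidableEq m] [Fintype p] [Fintype r] {L : Matrix m m ℂ} (hL : IsUnit L.det)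
    {A : ι → Matrix m n ℂ} {V : ι → Matrix m p ℂ} (hAV : ∑ s, (A s)ᴴ * L * V s = 0)
    (X : Matrix p r ℂ) (W : Matrix r o ℂ) :
    ∑ s, (A s)ᴴ * (L * L) * (L⁻¹ * V s * X * W) = 0 := by
  have hterm : ∀ s, (A s)ᴴ * (L * L) * (L⁻¹ * V s * X * W) = (A s)ᴴ * L * V s * (X * W) :=
    fun s => by simp only [Matrix.mul_assoc, mul_nonsing_inv_cancel_left _ _ hL]
  rw [Finset.sum_congr rfl fun s _ => hterm s, ← Matrix.sum_mul, hAV, Matrix.zero_mul]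

theorem trace_sum_conjTranspose_mul_mul_self_mul_inv {ι m n p : Type*} [Fintype ι]
    [Fintype m] [DecidableEq m] [Fintype n] [DecidableEq n] [Fintype p] [DecidableEq p]
    {L : Matrix m m ℂ} (hL : IsUnit L.det) (hLH : L.IsHermitian)
    {R : Matrix n n ℂ} (hR : IsUnit R.det) (hRH : R.IsHermitian)
    {V : ι → Matrix m p ℂ} (hV : ∑ s, (V s)ᴴ * V s = 1) (X Y : Matrix p n ℂ) :
    trace ((∑ s, (L⁻¹ * V s * X * R⁻¹)ᴴ * (L * L) * (L⁻¹ * V s * Y * R⁻¹)) * (R * R))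
      = trace (Xᴴ * Y) := by
  have hterm : ∀ s, (L⁻¹ * V s * X * R⁻¹)ᴴ * (L * L) * (L⁻¹ * V s * Y * R⁻¹) =
      R⁻¹ * Xᴴ * ((V s)ᴴ * V s) * (Y * R⁻¹) := by
    intro s
    simp only [conjTranspose_mul, hLH.inv.eq, hRH.inv.eq, Matrix.mul_assoc,
      mul_nonsing_inv_cancel_left _ _ hL, nonsing_inv_mul_cancel_left _ _ hL]
  rw [Finset.sum_congr rfl fun s _ => hterm s, ← Matrix.sum_mul, ← Matrix.mul_sum, hV,
    Matrix.mul_one]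
  calc trace (R⁻¹ * Xᴴ * (Y * R⁻¹) * (R * R))
      = trace (R⁻¹ * (Xᴴ * Y * R)) := by
        simp only [Matrix.mul_assoc, nonsing_inv_mul_cancel_left _ _ hR]
    _ = trace (Xᴴ * Y) := by
        rw [trace_mul_comm, Matrix.mul_assoc, mul_nonsing_inv _ hR, Matrix.mul_one]

end Matrix

namespace MPS

variable {N : ℕ} {q : Fin N → ℕ} {D : ℕ → ℕ}

/-- The left environment of the overlap `⟨Ψ[M], Ψ[M']⟩`. -/
def mixedLMat
    (M M' : (n : Fin N) → Fin (q n) → Matrix (Fin (D n.val)) (Fin (D (n.val + 1))) ℂ) :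
    (k : ℕ) → k ≤ N → Matrix (Fin (D k)) (Fin (D k)) ℂ
  | 0, _ => 1
  | k + 1, h => ∑ s : Fin (q ⟨k, h⟩),
      (M ⟨k, h⟩ s)ᴴ * mixedLMat M M' k (Nat.le_of_succ_le h) * M' ⟨k, h⟩ s

def IsLeftGauge
    (A B : (n : Fin N) → Fin (q n) → Matrix (Fin (D n.val)) (Fin (D (n.val + 1))) ℂ) : Prop :=
  ∀ n : Fin N, ∑ s : Fin (q n), (A n s)ᴴ * lMat A n.val n.isLt.le * B n s = 0

theorem eq_submatrix_finCast {a b : ℕ} (e : a = b)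
    (F : (k : ℕ) → k ≤ N → Matrix (Fin (D k)) (Fin (D k)) ℂ) (ha : a ≤ N) (hb : b ≤ N) :
    F a ha = (F b hb).submatrix (Fin.cast (congrArg D e)) (Fin.cast (congrArg D e)) := by
  subst e
  simp only [Fin.cast_refl, submatrix_id_id]

section Environment

variable (A M M' : (n : Fin N) → Fin (q n) → Matrix (Fin (D n.val)) (Fin (D (n.val + 1))) ℂ)

theorem mixedLMat_conjTranspose :
    ∀ (k : ℕ) (h : k ≤ N), (mixedLMat M M' k h)ᴴ = mixedLMat M' M k h
  | 0, _ => conjTranspose_one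
  | k + 1, h => by
    simp only [mixedLMat, conjTranspose_sum, conjTranspose_mul, conjTranspose_conjTranspose,
      mixedLMat_conjTranspose k, Matrix.mul_assoc]

theorem mixedLMat_eq_lMat_of_lt : ∀ (k : ℕ) (h : k ≤ N),
    (∀ i : Fin N, i.val < k → M i = A i) → (∀ i : Fin N, i.val < k → M' i = A i) →
    mixedLMat M M' k h = lMat A k h
  | 0, _, _, _ => rfl
  | k + 1, h, hM, hM' => by
    simp only [mixedLMat, lMat,
      mixedLMat_eq_lMat_of_lt k (Nat.le_of_succ_le h) (fun i hi => hM i (by omega))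
        (fun i hi => hM' i (by omega)),
      hM ⟨k, h⟩ (by simp), hM' ⟨k, h⟩ (by simp)]

theorem mixedLMat_eq_zero_of_le {k j : ℕ} (hk : k ≤ N) (hz : mixedLMat M M' k hk = 0)
    (hkj : k ≤ j) (hj : j ≤ N) : mixedLMat M M' j hj = 0 := by
  induction j, hkj using Nat.le_induction with
  | base => exact hz
  | succ j _ ih =>
    simp only [mixedLMat, ih (Nat.le_of_succ_le hj), Matrix.mul_zero, Matrix.zero_mul,
      Finset.sum_const_zero]

theorem trace_mixedLMat_eq_trace_mul_rAux : ∀ (j : ℕ) (hj : j ≤ N),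
    (∀ i : Fin N, N - j ≤ i.val → M i = A i) →
    (∀ i : Fin N, N - j ≤ i.val → M' i = A i) →
    trace (mixedLMat M M' N le_rfl) = trace (mixedLMat M M' (N - j) (Nat.sub_le N j) * rAux A j hj)
  | 0, _, _, _ => by simp [rAux]
  | j + 1, hj, hM, hM' => by
    rw [trace_mixedLMat_eq_trace_mul_rAux j (Nat.le_of_succ_le hj) (fun i hi => hM i (by omega))
      (fun i hi => hM' i (by omega)),
      eq_submatrix_finCast (by omega : N - j = N - (j + 1) + 1) (mixedLMat M M') _ (by omega),
      trace_submatrix_finCast_mul]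
    simp only [mixedLMat, rAux, hM ⟨N - (j + 1), by omega⟩ le_rfl,
      hM' ⟨N - (j + 1), by omega⟩ le_rfl, Finset.sum_mul, Finset.mul_sum, trace_sum]
    refine Finset.sum_congr rfl fun s _ => ?_
    simp only [Matrix.mul_assoc]
    rw [trace_mul_comm]
    simp only [Matrix.mul_assoc]

theorem trace_mixedLMat_eq_trace_mul_rMat (k : ℕ) (hk : k ≤ N)
    (hM : ∀ i : Fin N, k ≤ i.val → M i = A i)
    (hM' : ∀ i : Fin N, k ≤ i.val → M' i = A i) :
    trace (mixedLMat M M' N le_rfl) = trace (mixedLMat M M' k hk * rMat A k hk) := by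
  rw [trace_mixedLMat_eq_trace_mul_rAux A M M' (N - k) (Nat.sub_le N k)
      (fun i hi => hM i (by omega)) (fun i hi => hM' i (by omega)),
    eq_submatrix_finCast (by omega : N - (N - k) = k) (mixedLMat M M') _ hk,
    trace_submatrix_finCast_mul]
  rfl

/- Fixing the configuration on the sites `≥ k` keeps the sites that `prodAux _ _ k` does not see
from being counted `∏_{n ≥ k} q n` times. -/
theorem sum_filter_prodAux_conjTranspose_mul (k : ℕ) (hk : k ≤ N)
    (s₀ : (n : Fin N) → Fin (q n)) :
    ∑ s with ∀ i : Fin N, k ≤ i.val → s i = s₀ i,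
      (prodAux M s k hk)ᴴ * prodAux M' s k hk = mixedLMat M M' k hk := by
  induction k generalizing s₀ with
  | zero =>
    have hs : ∀ s : (n : Fin N) → Fin (q n),
        (∀ i : Fin N, 0 ≤ i.val → s i = s₀ i) ↔ s = s₀ :=
      fun s => ⟨fun h => funext fun i => h i (Nat.zero_le _), fun h i _ => h ▸ rfl⟩
    simp only [hs, Finset.filter_eq', Finset.mem_univ, if_true, Finset.sum_singleton, prodAux,
      mixedLMat, conjTranspose_one, Matrix.mul_one]
  | succ k ih =>
    set site : Fin N := ⟨k, hk⟩
    have hfiber : ∀ a : Fin (q site), ∀ s : (n : Fin N) → Fin (q n),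
        ((∀ i : Fin N, k + 1 ≤ i.val → s i = s₀ i) ∧ s site = a) ↔
          ∀ i : Fin N, k ≤ i.val → s i = Function.update s₀ site a i := by
      intro a s
      refine ⟨fun ⟨hs, hsa⟩ i hi => ?_, fun hs => ⟨fun i hi => ?_, ?_⟩⟩
      · rcases eq_or_ne i site with rfl | hne
        · simp [hsa]
        · rw [Function.update_of_ne hne]
          exact hs i (by have := Fin.val_ne_of_ne hne; simp [site] at this; omega)
      · rw [hs i (by omega), Function.update_of_ne (Fin.ne_of_val_ne (by simp [site]; omega))]
      · rw [hs site le_rfl, Function.update_self]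
    rw [← Finset.sum_fiberwise _ (fun s => s site)]
    simp only [Finset.filter_filter, hfiber]
    refine Finset.sum_congr rfl fun a _ => ?_
    rw [← ih (Nat.le_of_succ_le hk) (Function.update s₀ site a), Matrix.mul_sum, Matrix.sum_mul]
    refine Finset.sum_congr rfl fun s hs => ?_
    have hsa : s site = a := by simpa using (Finset.mem_filter.1 hs).2 site le_rfl
    simp only [prodAux, conjTranspose_mul, Matrix.mul_assoc]
    rw [hsa]

theorem sum_prodAux_conjTranspose_mul :
    ∑ s, (prodAux M s N le_rfl)ᴴ * prodAux M' s N le_rfl = mixedLMat M M' N le_rfl := by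
  rcases isEmpty_or_nonempty ((n : Fin N) → Fin (q n)) with hempty | ⟨⟨s₀⟩⟩
  · obtain ⟨n, hn⟩ := isEmpty_pi.1 hempty
    have hsite : mixedLMat M M' (n.val + 1) n.isLt = 0 := Finset.sum_of_isEmpty _
    rw [Finset.univ_eq_empty, Finset.sum_empty,
      mixedLMat_eq_zero_of_le M M' n.isLt hsite n.isLt le_rfl]
  · rw [← sum_filter_prodAux_conjTranspose_mul M M' N le_rfl s₀,
      Finset.filter_true_of_mem fun s _ i hi => absurd i.isLt (by omega)]

theorem sum_conj_psi_mul_psi (h0 : D 0 = 1) (hN : D N = 1) :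
    ∑ s, starRingEnd ℂ (psi (hN.trans h0.symm) M s) * psi (hN.trans h0.symm) M' s =
      trace (mixedLMat M M' N le_rfl) := by
  have := (finCongr h0).unique
  have := (finCongr hN).unique
  simp only [psi, Matrix.conj_trace_submatrix_mul_trace_submatrix, ← trace_sum,
    sum_prodAux_conjTranspose_mul]

theorem sum_conj_phi_mul_phi (h0 : D 0 = 1) (hN : D N = 1)
    (B C : (n : Fin N) → Fin (q n) → Matrix (Fin (D n.val)) (Fin (D (n.val + 1))) ℂ) :
    ∑ s, starRingEnd ℂ (phi (hN.trans h0.symm) A B s) * phi (hN.trans h0.symm) A C s =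
      ∑ n, ∑ m,
        trace (mixedLMat (Function.update A n (B n)) (Function.update A m (C m)) N le_rfl) := by
  simp only [phi, map_sum, Finset.sum_mul_sum]
  rw [Finset.sum_comm]
  refine Finset.sum_congr rfl fun n _ => ?_
  rw [Finset.sum_comm]
  exact Finset.sum_congr rfl fun m _ => sum_conj_psi_mul_psi _ _ h0 hN

theorem trace_mixedLMat_update_update_of_lt {m n : Fin N} (hmn : m < n)
    (B' : Fin (q n) → Matrix (Fin (D n.val)) (Fin (D (n.val + 1))) ℂ)
    (C' : Fin (q m) → Matrix (Fin (D m.val)) (Fin (D (m.val + 1))) ℂ)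
    (hC' : ∑ s, (A m s)ᴴ * lMat A m.val m.isLt.le * C' s = 0) :
    trace (mixedLMat (Function.update A n B') (Function.update A m C') N le_rfl) = 0 := by
  have hmn' : m.val < n.val := hmn
  suffices hsite :
      mixedLMat (Function.update A n B') (Function.update A m C') (m.val + 1) m.isLt = 0 by
    rw [mixedLMat_eq_zero_of_le _ _ m.isLt hsite m.isLt le_rfl, trace_zero]
  simp only [mixedLMat, Fin.eta]
  rw [mixedLMat_eq_lMat_of_lt A _ _ m.val _
      (fun i hi => Function.update_of_ne (Fin.ne_of_val_ne (by omega)) _ _)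
      (fun i hi => Function.update_of_ne (Fin.ne_of_val_ne (by omega)) _ _),
    Function.update_of_ne hmn.ne, Function.update_self]
  exact hC'

theorem trace_mixedLMat_update_update_of_ne {m n : Fin N} (hmn : m ≠ n)
    (B' : Fin (q n) → Matrix (Fin (D n.val)) (Fin (D (n.val + 1))) ℂ)
    (C' : Fin (q m) → Matrix (Fin (D m.val)) (Fin (D (m.val + 1))) ℂ)
    (hB' : ∑ s, (A n s)ᴴ * lMat A n.val n.isLt.le * B' s = 0)
    (hC' : ∑ s, (A m s)ᴴ * lMat A m.val m.isLt.le * C' s = 0) :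
    trace (mixedLMat (Function.update A n B') (Function.update A m C') N le_rfl) = 0 := by
  rcases hmn.lt_or_gt with hlt | hgt
  · exact trace_mixedLMat_update_update_of_lt A hlt B' C' hC'
  · rw [← mixedLMat_conjTranspose, trace_conjTranspose,
      trace_mixedLMat_update_update_of_lt A hgt C' B' hB', star_zero]

theorem trace_mixedLMat_update_update_self (n : Fin N)
    (B' C' : Fin (q n) → Matrix (Fin (D n.val)) (Fin (D (n.val + 1))) ℂ) :
    trace (mixedLMat (Function.update A n B') (Function.update A n C') N le_rfl) =
      trace ((∑ s, (B' s)ᴴ * lMat A n.val n.isLt.le * C' s) * rMat A (n.val + 1) n.isLt) := by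
  have hother : ∀ (j : Fin N) (Z), j.val ≠ n.val → Function.update A n Z j = A j :=
    fun j Z hj => Function.update_of_ne (Fin.ne_of_val_ne hj) _ _
  rw [trace_mixedLMat_eq_trace_mul_rMat A _ _ (n.val + 1) n.isLt
    (fun i hi => hother i _ (by omega)) (fun i hi => hother i _ (by omega))]
  simp only [mixedLMat, Fin.eta, Function.update_self]
  rw [mixedLMat_eq_lMat_of_lt A _ _ n.val _
    (fun i hi => hother i _ (by omega)) (fun i hi => hother i _ (by omega))]

theorem sum_conj_phi_mul_phi_of_isLeftGauge (h0 : D 0 = 1) (hN : D N = 1)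
    {B C : (n : Fin N) → Fin (q n) → Matrix (Fin (D n.val)) (Fin (D (n.val + 1))) ℂ}
    (hB : IsLeftGauge A B) (hC : IsLeftGauge A C) :
    ∑ s, starRingEnd ℂ (phi (hN.trans h0.symm) A B s) * phi (hN.trans h0.symm) A C s =
      ∑ n, trace ((∑ s, (B n s)ᴴ * lMat A n.val n.isLt.le * C n s) *
        rMat A (n.val + 1) n.isLt) := by
  rw [sum_conj_phi_mul_phi A h0 hN]
  refine Finset.sum_congr rfl fun n _ => ?_
  rw [Finset.sum_eq_single n
      (fun m _ hmn => trace_mixedLMat_update_update_of_ne A hmn _ _ (hB n) (hC m)) (by simp),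
    trace_mixedLMat_update_update_self]

end Environment

section Canonical

variable (A : (n : Fin N) → Fin (q n) → Matrix (Fin (D n.val)) (Fin (D (n.val + 1))) ℂ)
  (hl : ∀ (k : ℕ) (h : k ≤ N), (lMat A k h).PosDef)
  (hr : ∀ (k : ℕ) (h : k ≤ N), (rMat A k h).PosDef)
  {K : Fin N → ℕ} (V : (n : Fin N) → Fin (q n) → Matrix (Fin (D n.val)) (Fin (K n)) ℂ)

/-- `B^s(n) = l(n)^{-1/2} V^s(n) Z(n) r(n+1)^{-1/2}`: sites are numbered from `0`, so `l(n)` and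
`r(n+1)` are the paper's `l(n−1)` and `r(n)`. -/
def canonicalTangent (Z : (n : Fin N) → Matrix (Fin (K n)) (Fin (D (n.val + 1))) ℂ) :
    (n : Fin N) → Fin (q n) → Matrix (Fin (D n.val)) (Fin (D (n.val + 1))) ℂ :=
  fun n t => ((hl n.val n.isLt.le).posSemidef.sqrt)⁻¹ * V n t * Z n *
    ((hr (n.val + 1) n.isLt).posSemidef.sqrt)⁻¹

theorem isLeftGauge_canonicalTangent
    (hV : ∀ n : Fin N,
      ∑ s : Fin (q n), (A n s)ᴴ * (hl n.val n.isLt.le).posSemidef.sqrt * V n s = 0)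
    (Z : (n : Fin N) → Matrix (Fin (K n)) (Fin (D (n.val + 1))) ℂ) :
    IsLeftGauge A (canonicalTangent A hl hr V Z) := fun n => by
  have := Matrix.sum_conjTranspose_mul_mul_self_mul_inv_eq_zero
    (hl n.val n.isLt.le).isUnit_det_sqrt (hV n) (Z n) ((hr (n.val + 1) n.isLt).posSemidef.sqrt)⁻¹
  rwa [(hl n.val n.isLt.le).posSemidef.sqrt_mul_self] at this

theorem trace_canonicalTangent (hV : ∀ n : Fin N, ∑ s : Fin (q n), (V n s)ᴴ * V n s = 1)
    (X Y : (n : Fin N) → Matrix (Fin (K n)) (Fin (D (n.val + 1))) ℂ) (n : Fin N) :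
    trace ((∑ s, (canonicalTangent A hl hr V X n s)ᴴ * lMat A n.val n.isLt.le *
        canonicalTangent A hl hr V Y n s) * rMat A (n.val + 1) n.isLt) =
      trace ((X n)ᴴ * Y n) := by
  have := Matrix.trace_sum_conjTranspose_mul_mul_self_mul_inv
    (hl n.val n.isLt.le).isUnit_det_sqrt (hl n.val n.isLt.le).posSemidef.isHermitian_sqrt
    (hr (n.val + 1) n.isLt).isUnit_det_sqrt (hr (n.val + 1) n.isLt).posSemidef.isHermitian_sqrt
    (hV n) (X n) (Y n)
  rwa [(hl n.val n.isLt.le).posSemidef.sqrt_mul_self,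
    (hr (n.val + 1) n.isLt).posSemidef.sqrt_mul_self] at this

end Canonical

end MPS

/-- **The canonical parameterization of left-gauge-fixed tangent vectors makes the
pullback metric the identity:** with `B^s(n) = l(n−1)^{-1/2} V^s_L(n) X(n) r(n)^{-1/2}`
(and similarly `C` from `Y`), (i) `B` satisfies the left gauge-fixing conditions, and
(ii) `⟨Φ[B; A], Φ[C; A]⟩ = Σ_{n=1}^N tr[X(n)† Y(n)]`. -/
theorem mps_canonical_parameterization (N : ℕ) (q : Fin N → ℕ) (D : ℕ → ℕ)
    (h0 : D 0 = 1) (hN : D N = 1)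
    (A : (n : Fin N) → Fin (q n) → Matrix (Fin (D n.val)) (Fin (D (n.val + 1))) ℂ)
    (hl : ∀ (k : ℕ) (h : k ≤ N), (MPS.lMat A k h).PosDef)
    (hr : ∀ (k : ℕ) (h : k ≤ N), (MPS.rMat A k h).PosDef)
    (K : Fin N → ℕ)
    (V : (n : Fin N) → Fin (q n) → Matrix (Fin (D n.val)) (Fin (K n)) ℂ)
    (hV1 : ∀ n : Fin N,
      ∑ s : Fin (q n), (A n s)ᴴ * (hl n.val n.isLt.le).posSemidef.sqrt * V n s = 0)
    (hV2 : ∀ n : Fin N, ∑ s : Fin (q n), (V n s)ᴴ * V n s = 1)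
    (X Y : (n : Fin N) → Matrix (Fin (K n)) (Fin (D (n.val + 1))) ℂ) :
    (∀ n : Fin N,
      ∑ s : Fin (q n),
        (A n s)ᴴ * MPS.lMat A n.val n.isLt.le *
          (((hl n.val n.isLt.le).posSemidef.sqrt)⁻¹ * V n s * X n *
            ((hr (n.val + 1) n.isLt).posSemidef.sqrt)⁻¹) = 0) ∧
    ∑ s : (n : Fin N) → Fin (q n),
        (starRingEnd ℂ)
            (MPS.phi (hN.trans h0.symm) A
              (fun n t => ((hl n.val n.isLt.le).posSemidef.sqrt)⁻¹ * V n t * X n *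
                ((hr (n.val + 1) n.isLt).posSemidef.sqrt)⁻¹) s) *
          MPS.phi (hN.trans h0.symm) A
            (fun n t => ((hl n.val n.isLt.le).posSemidef.sqrt)⁻¹ * V n t * Y n *
              ((hr (n.val + 1) n.isLt).posSemidef.sqrt)⁻¹) s
      = ∑ n : Fin N, Matrix.trace ((X n)ᴴ * Y n) := by
  have hB := MPS.isLeftGauge_canonicalTangent A hl hr V hV1 X
  have hC := MPS.isLeftGauge_canonicalTangent A hl hr V hV1 Y
  exact ⟨hB, (MPS.sum_conj_phi_mul_phi_of_isLeftGauge A h0 hN hB hC).trans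
    (Finset.sum_congr rfl fun n _ => MPS.trace_canonicalTangent A hl hr V hV2 X Y n)⟩
end
end

section
/- Vertical directions are annihilated by the uniform MPS tangent map on a ring: let A be a q-tuple of complex D×D matrices, x a complex D×D matrix, α ∈ ℂ, and define B^s = A^s·x − x·A^s + α·A^s. Then the translation-invariant tangent vector satisfies Φ(B; A) = N·α·Ψ(A); in particular Φ(A^s x − x A^s; A) = 0. -/
/-!
STATEMENT 14: Vertical directions are annihilated by the uniform MPS tangent map on a
ring: with `B^s = A^s x − x A^s + α A^s` one has `Φ(B; A) = N·α·Ψ(A)`; in particular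
`Φ(A^s x − x A^s; A) = 0`.
-/

open Matrix

noncomputable section

namespace uMPS

/-- The uniform matrix product state on a ring of `N` sites: the coefficient on the basis
vector indexed by `(s_1, …, s_N)` is `tr[A^{s_1} ⋯ A^{s_N}]`. -/
def psi (D q N : ℕ) (A : Fin q → Matrix (Fin D) (Fin D) ℂ) : (Fin N → Fin q) → ℂ :=
  fun s => Matrix.trace (List.ofFn fun n : Fin N => A (s n)).prod

/-- The translation-invariant uniform MPS tangent vector `Φ(B; A)`: the coefficient on
the basis vector indexed by `(s_1, …, s_N)` is
`Σ_{n=1}^N tr[A^{s_1} ⋯ A^{s_{n-1}} B^{s_n} A^{s_{n+1}} ⋯ A^{s_N}]`. -/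
def phi (D q N : ℕ) (A B : Fin q → Matrix (Fin D) (Fin D) ℂ) : (Fin N → Fin q) → ℂ :=
  fun s => ∑ n : Fin N,
    Matrix.trace (List.ofFn fun m : Fin N => if m = n then B (s m) else A (s m)).prod

end uMPS

/-!
Replacing one factor `a` of the product `P = a₁ ⋯ a_N` by `a x − x a + α a` and summing over
the position is a Leibniz rule: the commutator terms telescope to `P x − x P` and the scalar
terms contribute `N α P`. Under the trace the commutator `P x − x P` vanishes.
-/

section LeibnizRule

variable {K R : Type*}

theorem List.sum_prod_ofFn_ite_succ [Semiring R] {N : ℕ} (f g : Fin (N + 1) → R) :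
    ∑ n, (List.ofFn fun m => if m = n then g m else f m).prod =
      g 0 * (List.ofFn fun m => f m.succ).prod +
        f 0 * ∑ n, (List.ofFn fun m : Fin N => if m = n then g m.succ else f m.succ).prod := by
  simp [Fin.sum_univ_succ, List.ofFn_succ, (Fin.succ_ne_zero _).symm, Finset.mul_sum]

theorem List.sum_prod_ofFn_ite_commutator_add_smul [CommSemiring K] [Ring R] [Algebra K R]
    {N : ℕ} (f : Fin N → R) (x : R) (α : K) :
    ∑ n, (List.ofFn fun m => if m = n then f m * x - x * f m + α • f m else f m).prod =
      (List.ofFn f).prod * x - x * (List.ofFn f).prod + ((N : K) * α) • (List.ofFn f).prod := by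
  induction N with
  | zero => simp
  | succ N ih =>
    rw [List.sum_prod_ofFn_ite_succ, ih, List.ofFn_succ, List.prod_cons]
    simp only [add_mul, sub_mul, mul_add, mul_sub, smul_mul_assoc, mul_smul_comm, mul_assoc,
      Nat.cast_succ, add_smul, one_mul]
    abel

end LeibnizRule

theorem uMPS.phi_commutator_add_smul (D q N : ℕ) (A : Fin q → Matrix (Fin D) (Fin D) ℂ)
    (x : Matrix (Fin D) (Fin D) ℂ) (α : ℂ) :
    uMPS.phi D q N A (fun s => A s * x - x * A s + α • A s)
      = ((N : ℂ) * α) • uMPS.psi D q N A := by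
  funext s
  simp only [uMPS.phi, uMPS.psi, ← Matrix.trace_sum,
    List.sum_prod_ofFn_ite_commutator_add_smul (fun m => A (s m)), trace_add, trace_sub,
    trace_smul, trace_mul_comm _ x, sub_self, zero_add, Pi.smul_apply]

/-- **Vertical directions are annihilated by the uniform MPS tangent map:** with
`B^s = A^s x − x A^s + α A^s`, `Φ(B; A) = N·α·Ψ(A)`; in particular
`Φ(A x − x A; A) = 0`. -/
theorem uMPS_vertical_tangent (D q N : ℕ) (A : Fin q → Matrix (Fin D) (Fin D) ℂ)
    (x : Matrix (Fin D) (Fin D) ℂ) (α : ℂ) :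
    uMPS.phi D q N A (fun s => A s * x - x * A s + α • A s)
        = ((N : ℂ) * α) • uMPS.psi D q N A ∧
    uMPS.phi D q N A (fun s => A s * x - x * A s) = 0 :=
  ⟨uMPS.phi_commutator_add_smul D q N A x α, by
    simpa using uMPS.phi_commutator_add_smul D q N A x 0⟩
end
end

section
/- The stabilizer of an injective uniform MPS parameter consists only of scalar matrices: let A be a q-tuple of complex D×D matrices, z ∈ ℂ, and r an invertible complex D×D matrix such that Σ_s A^s r A^s† = z·r and such that every complex D×D matrix ρ with Σ_s A^s ρ A^s† = z·ρ is a scalar multiple of r. If G is an invertible complex D×D matrix with G^{-1}A^sG = A^s for all s = 1,…,q, then G = c·1_D for some nonzero c ∈ ℂ. -/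
/-!
If `G` commutes with every `A^s`, then left multiplication by `G` commutes with the transfer map
`ρ ↦ Σ_s A^s ρ A^s†`, so `G r` lies in the eigenspace of `r`. That eigenspace is the line through
`r`, hence `G r = c r`, and cancelling the invertible `r` gives `G = c • 1`.
-/

open Matrix

theorem Matrix.commute_of_inv_mul_mul_eq {n α : Type*} [Fintype n] [DecidableEq n] [CommRing α]
    {G A : Matrix n n α} (hG : IsUnit G) (h : G⁻¹ * A * G = A) : Commute G A := by
  have := hG.invertible
  rw [Matrix.mul_assoc, inv_mul_eq_iff_eq_mul_of_invertible] at h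
  exact h.symm

theorem Finset.sum_mul_mul_eq_mul_sum_of_commute {ι R : Type*} [NonUnitalSemiring R] (s : Finset ι)
    (a b : ι → R) (g x : R) (h : ∀ i ∈ s, Commute g (a i)) :
    ∑ i ∈ s, a i * (g * x) * b i = g * ∑ i ∈ s, a i * x * b i := by
  rw [Finset.mul_sum]
  refine Finset.sum_congr rfl fun i hi => ?_
  rw [← mul_assoc, ← (h i hi).eq, mul_assoc g, mul_assoc g]

theorem eq_smul_one_of_mul_eq_smul {R A : Type*} [CommSemiring R] [Semiring A] [Algebra R A]
    {g r : A} (hr : IsUnit r) {c : R} (h : g * r = c • r) : g = c • 1 :=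
  hr.mul_left_injective (by simpa only [smul_one_mul] using h)

theorem IsUnit.exists_ne_zero_eq_smul_one {K A : Type*} [Semiring K] [Nontrivial K] [Semiring A]
    [Module K A] {g : A} (hg : IsUnit g) {c : K} (h : g = c • 1) : ∃ c' : K, c' ≠ 0 ∧ g = c' • 1 := by
  by_cases hc : c = 0
  · -- a unit equal to `0` forces the zero ring (for matrices: `D = 0`), where any scalar works
    have : Subsingleton A :=
      subsingleton_of_zero_eq_one (isUnit_zero_iff.mp (by simpa [hc, h] using hg))
    exact ⟨1, one_ne_zero, Subsingleton.elim _ _⟩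
  · exact ⟨c, hc, h⟩

/-- **The stabilizer of an injective uniform MPS parameter consists only of scalar
matrices:** if `z` is an eigenvalue of the completely positive map `ρ ↦ Σ_s A^s ρ A^s†`
whose eigenspace is one-dimensional and spanned by an invertible matrix `r`, then any
invertible `G` with `G⁻¹ A^s G = A^s` for all `s` is a nonzero scalar multiple of the
identity. -/
theorem uMPS_stabilizer_scalar (D q : ℕ) (A : Fin q → Matrix (Fin D) (Fin D) ℂ)
    (z : ℂ) (r : Matrix (Fin D) (Fin D) ℂ) (hr : IsUnit r)
    (heig : ∑ s : Fin q, A s * r * (A s)ᴴ = z • r)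
    (huniq : ∀ ρ : Matrix (Fin D) (Fin D) ℂ,
      (∑ s : Fin q, A s * ρ * (A s)ᴴ = z • ρ) → ∃ c : ℂ, ρ = c • r)
    (G : Matrix (Fin D) (Fin D) ℂ) (hG : IsUnit G)
    (hfix : ∀ s : Fin q, G⁻¹ * A s * G = A s) :
    ∃ c : ℂ, c ≠ 0 ∧ G = c • (1 : Matrix (Fin D) (Fin D) ℂ) := by
  have hGr : ∑ s : Fin q, A s * (G * r) * (A s)ᴴ = z • (G * r) := by
    rw [Finset.sum_mul_mul_eq_mul_sum_of_commute _ _ _ _ _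
      fun s _ => commute_of_inv_mul_mul_eq hG (hfix s), heig, Matrix.mul_smul]
  obtain ⟨c, hc⟩ := huniq (G * r) hGr
  exact hG.exists_ne_zero_eq_smul_one (eq_smul_one_of_mul_eq_smul hr hc)
end

section
/- Injective uniform matrix product states are exponentially clustering: let E be a complex M×M matrix and l, r ∈ ℂ^M with E·r = r, E†·l = l, ⟨l, r⟩ = 1, and suppose the spectral radius of E − S is strictly less than 1, where S = r·l†. Then for every real c with spectralRadius(E − S) < c < 1 and all complex M×M matrices F, F', there exists a constant C ≥ 0 such that for all n ≥ 1, |l†·F·E^{n−1}·F'·r − (l†·F·r)·(l†·F'·r)| ≤ C·c^{n−1}. -/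
/-!
Since `S = r l†` is an idempotent with `E S = S E = S`, one has `E ^ m - S = (E - S) ^ m (1 - S)`
for every `m` (the factor `1 - S` makes this true also for `m = 0`). As `l† F S F' r` is the
product of the two one-point functions, the connected correlator at distance `m + 1` is
`l† F (E - S) ^ m (1 - S) F' r`, which is at most a constant times `‖(E - S) ^ m‖`. By Gelfand's
formula, `‖(E - S) ^ m‖ ≤ C c ^ m` as soon as `c` exceeds the spectral radius of `E - S`.
-/

open Matrix Filter Asymptotics
open scoped Matrix.Norms.Operator

theorem exists_norm_pow_le_of_spectralRadius_lt {A : Type*} [NormedRing A] [NormedAlgebra ℂ A]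
    [CompleteSpace A] {a : A} {c : ℝ} (hc : spectralRadius ℂ a < ENNReal.ofReal c) :
    ∃ C, 0 ≤ C ∧ ∀ m : ℕ, ‖a ^ m‖ ≤ C * c ^ m := by
  have hc0 : 0 < c := ENNReal.ofReal_pos.mp (pos_of_gt hc)
  have hev : ∀ᶠ m : ℕ in atTop, ‖a ^ m‖ ≤ ‖c ^ m‖ := by
    have hgelfand := spectrum.pow_norm_pow_one_div_tendsto_nhds_spectralRadius a
    filter_upwards [hgelfand.eventually_lt_const hc, eventually_gt_atTop 0] with m hm hm0
    rw [ENNReal.ofReal_lt_ofReal_iff hc0, one_div,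
      Real.rpow_inv_lt_iff_of_pos (norm_nonneg _) hc0.le (by positivity), Real.rpow_natCast] at hm
    rw [Real.norm_of_nonneg (by positivity)]
    exact hm.le
  obtain ⟨C, hC0, hC⟩ := bound_of_isBigO_nat_atTop (IsBigO.of_bound' hev)
  refine ⟨C, hC0.le, fun m => ?_⟩
  simpa [abs_of_pos hc0] using hC (pow_ne_zero m hc0.ne')

theorem IsIdempotentElem.pow_sub_eq_sub_pow_mul_one_sub {R : Type*} [Ring R] {e s : R}
    (hs : IsIdempotentElem s) (hes : e * s = s) (hse : s * e = s) (m : ℕ) :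
    e ^ m - s = (e - s) ^ m * (1 - s) := by
  have hse_pow : ∀ k : ℕ, s * e ^ k = s := by
    intro k
    induction k with
    | zero => simp
    | succ k ih => rw [pow_succ, ← mul_assoc, ih, hse]
  induction m with
  | zero => simp
  | succ m ih =>
    calc e ^ (m + 1) - s = e * e ^ m - e * s - (s * e ^ m - s * s) := by
          rw [← pow_succ', hes, hse_pow, hs.eq]; abel
      _ = (e - s) * ((e - s) ^ m * (1 - s)) := by rw [← ih]; noncomm_ring
      _ = (e - s) ^ (m + 1) * (1 - s) := by rw [pow_succ', mul_assoc]

namespace Matrix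

variable {m n R : Type*} [Fintype m] [Fintype n]

theorem isIdempotentElem_vecMulVec [CommSemiring R] {u v : n → R} (h : v ⬝ᵥ u = 1) :
    IsIdempotentElem (vecMulVec u v) := by
  rw [IsIdempotentElem, vecMulVec_mul_vecMulVec, h, one_smul]

theorem dotProduct_mul_vecMulVec_mul_mulVec [CommSemiring R] (x y u v : n → R)
    (A B : Matrix n n R) :
    x ⬝ᵥ (A * vecMulVec u v * B) *ᵥ y = (x ⬝ᵥ A *ᵥ u) * (v ⬝ᵥ B *ᵥ y) := by
  rw [mul_vecMulVec, vecMulVec_mul, vecMulVec_mulVec, op_smul_eq_smul, dotProduct_smul,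
    smul_eq_mul, mul_comm]
  simp only [dotProduct_mulVec]

theorem norm_dotProduct_mulVec_le [NonUnitalSeminormedRing R] (x : m → R) (P : Matrix m n R)
    (y : n → R) : ‖x ⬝ᵥ P *ᵥ y‖ ≤ (∑ i, ‖x i‖) * ‖P‖ * ‖y‖ :=
  calc ‖x ⬝ᵥ P *ᵥ y‖ ≤ ∑ i, ‖x i‖ * ‖(P *ᵥ y) i‖ :=
        (norm_sum_le _ _).trans (Finset.sum_le_sum fun i _ => norm_mul_le _ _)
    _ ≤ ∑ i, ‖x i‖ * ‖P *ᵥ y‖ := by gcongr; exact norm_le_pi_norm _ _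
    _ ≤ (∑ i, ‖x i‖) * (‖P‖ * ‖y‖) := by
        rw [← Finset.sum_mul]; gcongr; exact linfty_opNorm_mulVec _ _
    _ = (∑ i, ‖x i‖) * ‖P‖ * ‖y‖ := (mul_assoc _ _ _).symm

end Matrix

theorem uMPS_exponential_clustering_general (M : ℕ) (E : Matrix (Fin M) (Fin M) ℂ) (l r : Fin M → ℂ)
    (hr : E.mulVec r = r) (hl : Eᴴ.mulVec l = l)
    (hlr : dotProduct (star l) r = 1)
    (c : ℝ)
    (hc1 : spectralRadius ℂ (E - Matrix.vecMulVec r (star l)) < ENNReal.ofReal c)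
    (F F' : Matrix (Fin M) (Fin M) ℂ) :
    ∃ C : ℝ, 0 ≤ C ∧ ∀ n : ℕ, 1 ≤ n →
      ‖dotProduct (star l) ((F * E ^ (n - 1) * F').mulVec r) -
          dotProduct (star l) (F.mulVec r) *
            dotProduct (star l) (F'.mulVec r)‖
        ≤ C * c ^ (n - 1) := by
  set S := vecMulVec r (star l)
  have hES : E * S = S := by rw [mul_vecMulVec, hr]
  have hSE : S * E = S := by
    rw [vecMulVec_mul, ← conjTranspose_conjTranspose E, ← star_mulVec, hl]
  have hS : IsIdempotentElem S := isIdempotentElem_vecMulVec hlr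
  obtain ⟨C, hC0, hC⟩ := exists_norm_pow_le_of_spectralRadius_lt hc1
  set G := (1 - S) * F'
  refine ⟨(∑ i, ‖star l i‖) * ‖F‖ * C * ‖G‖ * ‖r‖, by positivity, fun n _ => ?_⟩
  have hconnected : star l ⬝ᵥ (F * E ^ (n - 1) * F') *ᵥ r -
      (star l ⬝ᵥ F *ᵥ r) * (star l ⬝ᵥ F' *ᵥ r) = star l ⬝ᵥ (F * (E - S) ^ (n - 1) * G) *ᵥ r := by
    rw [← dotProduct_mul_vecMulVec_mul_mulVec, ← dotProduct_sub, ← sub_mulVec, ← sub_mul,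
      ← mul_sub, hS.pow_sub_eq_sub_pow_mul_one_sub hES hSE]
    simp only [G, Matrix.mul_assoc]
  calc _ ≤ (∑ i, ‖star l i‖) * ‖F * (E - S) ^ (n - 1) * G‖ * ‖r‖ := by
        rw [hconnected]; exact norm_dotProduct_mulVec_le _ _ _
    _ ≤ (∑ i, ‖star l i‖) * (‖F‖ * (C * c ^ (n - 1)) * ‖G‖) * ‖r‖ := by
        gcongr; exact norm_mul₃_le.trans (by gcongr; exact hC _)
    _ = _ := by ring

/-- **Exponential clustering:** if `E r = r`, `E† l = l`, `⟨l, r⟩ = 1` and the spectral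
radius of `E − S` (with `S = r·l†`) is strictly less than `1`, then for every real `c`
with `spectralRadius (E − S) < c < 1` and all `F`, `F'`, there is `C ≥ 0` such that the
connected correlator at distance `n` is bounded by `C·c^{n−1}`. -/
theorem uMPS_exponential_clustering (M : ℕ) (E : Matrix (Fin M) (Fin M) ℂ) (l r : Fin M → ℂ)
    (hr : E.mulVec r = r) (hl : Eᴴ.mulVec l = l)
    (hlr : dotProduct (star l) r = 1)
    (hspec : spectralRadius ℂ (E - Matrix.vecMulVec r (star l)) < 1)
    (c : ℝ)
    (hc1 : spectralRadius ℂ (E - Matrix.vecMulVec r (star l)) < ENNReal.ofReal c)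
    (hc2 : c < 1)
    (F F' : Matrix (Fin M) (Fin M) ℂ) :
    ∃ C : ℝ, 0 ≤ C ∧ ∀ n : ℕ, 1 ≤ n →
      ‖dotProduct (star l) ((F * E ^ (n - 1) * F').mulVec r) -
          dotProduct (star l) (F.mulVec r) *
            dotProduct (star l) (F'.mulVec r)‖
        ≤ C * c ^ (n - 1) :=
  uMPS_exponential_clustering_general M E l r hr hl hlr c hc1 F F'
end

section
/- The fidelity per site between two uniform matrix product states is at most one: for any q-tuple A of complex D×D matrices and any q-tuple B of complex D'×D' matrices, the spectral radii of the transfer matrices satisfy spectralRadius(Σ_s A^s ⊗ conj(B^s))² ≤ spectralRadius(Σ_s A^s ⊗ conj(A^s)) · spectralRadius(Σ_s B^s ⊗ conj(B^s)). -/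
/-! Expanding the `k`-th power of a transfer matrix over words `w` of length `k` gives
`(E^A_B)^k = ∑_w A_w ⊗ conj(B_w)`, so by Cauchy–Schwarz over the words each entry of
`(E^A_B)^k` is bounded in modulus by the geometric mean of an entry of `(E^A_A)^k` and one of
`(E^B_B)^k`. Hence `‖(E^A_B)^k‖² ≤ C ‖(E^A_A)^k‖ ‖(E^B_B)^k‖` with `C` independent of
`k`, and Gelfand's formula turns this into the inequality between spectral radii after taking
`k`-th roots. -/

open Matrix Kronecker Filter Topology
open scoped ENNReal NNReal ComplexConjugate

attribute [local instance] Matrix.linftyOpSeminormedAddCommGroup Matrix.linftyOpNormedRing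
  Matrix.linftyOpNormedAlgebra

def wordProd {M ι : Type*} [Monoid M] (f : ι → M) {k : ℕ} (w : Fin k → ι) : M :=
  (List.ofFn fun t => f (w t)).prod

theorem sum_pow_eq_sum_wordProd {S ι : Type*} [Semiring S] [Fintype ι] (f : ι → S) (k : ℕ) :
    (∑ i, f i) ^ k = ∑ w : Fin k → ι, wordProd f w := by
  induction k with
  | zero => simp [wordProd]
  | succ k ih =>
    rw [pow_succ', ih, Finset.sum_mul_sum, ← (Fin.consEquiv fun _ => ι).sum_comp,
      Fintype.sum_prod_type]
    simp [wordProd, List.ofFn_succ]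

theorem map_wordProd {M N F ι : Type*} [Monoid M] [Monoid N] [FunLike F M N]
    [MonoidHomClass F M N] (φ : F) (f : ι → M) {k : ℕ} (w : Fin k → ι) :
    φ (wordProd f w) = wordProd (fun i => φ (f i)) w := by
  simp [wordProd, map_list_prod, List.map_ofFn, Function.comp_def]

namespace Matrix

variable {ι m n R : Type*} [Fintype m] [Fintype n]

theorem wordProd_kronecker [DecidableEq m] [DecidableEq n] [CommSemiring R]
    (A : ι → Matrix m m R) (B : ι → Matrix n n R) {k : ℕ} (w : Fin k → ι) :
    wordProd (fun i => A i ⊗ₖ B i) w = wordProd A w ⊗ₖ wordProd B w := by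
  induction k with
  | zero => simp [wordProd]
  | succ k ih =>
    simp only [wordProd, List.ofFn_succ, List.prod_cons] at ih ⊢
    rw [ih, mul_kronecker_mul]

theorem wordProd_map [DecidableEq m] {S : Type*} [Semiring R] [Semiring S] (f : R →+* S)
    (A : ι → Matrix m m R) {k : ℕ} (w : Fin k → ι) :
    wordProd (fun i => (A i).map f) w = (wordProd A w).map f :=
  (map_wordProd f.mapMatrix A w).symm

variable [SeminormedAddCommGroup R]

theorem nnnorm_entry_le_linfty_opNNNorm (M : Matrix m n R) (i : m) (j : n) :
    ‖M i j‖₊ ≤ ‖M‖₊ := by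
  rw [linfty_opNNNorm_def]
  exact (Finset.single_le_sum (fun _ _ => zero_le) (Finset.mem_univ j)).trans
    (Finset.le_sup (f := fun i => ∑ j, ‖M i j‖₊) (Finset.mem_univ i))

theorem linfty_opNNNorm_le_card_mul (M : Matrix m n R) {C : ℝ≥0}
    (h : ∀ i j, ‖M i j‖₊ ≤ C) : ‖M‖₊ ≤ Fintype.card n * C := by
  rw [linfty_opNNNorm_def]
  refine Finset.sup_le fun i _ => ?_
  simpa using Finset.sum_le_sum fun j (_ : j ∈ Finset.univ) => h i j

end Matrix

theorem nnnorm_sum_mul_conj_self {W : Type*} [Fintype W] (a : W → ℂ) :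
    ‖∑ w, a w * conj (a w)‖₊ = ∑ w, ‖a w‖₊ ^ 2 := by
  ext
  simp_rw [Complex.mul_conj']
  push_cast
  simp_rw [← Complex.ofReal_pow, ← Complex.ofReal_sum]
  exact Complex.norm_of_nonneg (by positivity)

theorem nnnorm_sum_mul_conj_sq_le {W : Type*} [Fintype W] (a b : W → ℂ) :
    ‖∑ w, a w * conj (b w)‖₊ ^ 2
      ≤ ‖∑ w, a w * conj (a w)‖₊ * ‖∑ w, b w * conj (b w)‖₊ := by
  rw [nnnorm_sum_mul_conj_self, nnnorm_sum_mul_conj_self]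
  calc ‖∑ w, a w * conj (b w)‖₊ ^ 2 ≤ (∑ w, ‖a w‖₊ * ‖b w‖₊) ^ 2 := by
        gcongr
        simpa using nnnorm_sum_le Finset.univ fun w => a w * conj (b w)
    _ ≤ _ := Finset.sum_mul_sq_le_sq_mul_sq _ _ _

section TransferMatrix

variable {ι m n : Type*} [Fintype ι] [Fintype m] [DecidableEq m] [Fintype n] [DecidableEq n]
  (A : ι → Matrix m m ℂ) (B : ι → Matrix n n ℂ)

def transferMatrix : Matrix (m × n) (m × n) ℂ :=
  ∑ s, A s ⊗ₖ (B s).map conj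

theorem transferMatrix_pow_apply (k : ℕ) (i j : m) (i' j' : n) :
    (transferMatrix A B ^ k) (i, i') (j, j')
      = ∑ w : Fin k → ι, wordProd A w i j * conj (wordProd B w i' j') := by
  simp_rw [transferMatrix, sum_pow_eq_sum_wordProd, wordProd_kronecker, wordProd_map,
    Matrix.sum_apply, kronecker_apply, map_apply]

theorem nnnorm_transferMatrix_pow_apply_sq_le (k : ℕ) (i j : m) (i' j' : n) :
    ‖(transferMatrix A B ^ k) (i, i') (j, j')‖₊ ^ 2
      ≤ ‖(transferMatrix A A ^ k) (i, i) (j, j)‖₊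
        * ‖(transferMatrix B B ^ k) (i', i') (j', j')‖₊ := by
  simp only [transferMatrix_pow_apply]
  exact nnnorm_sum_mul_conj_sq_le _ _

theorem nnnorm_transferMatrix_pow_sq_le (k : ℕ) :
    ‖transferMatrix A B ^ k‖₊ ^ 2
      ≤ (Fintype.card (m × n) : ℝ≥0) ^ 2
        * (‖transferMatrix A A ^ k‖₊ * ‖transferMatrix B B ^ k‖₊) := by
  set g := NNReal.sqrt (‖transferMatrix A A ^ k‖₊ * ‖transferMatrix B B ^ k‖₊)
  have hentry : ∀ p r, ‖(transferMatrix A B ^ k) p r‖₊ ≤ g := by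
    rintro ⟨i, i'⟩ ⟨j, j'⟩
    rw [NNReal.le_sqrt_iff_sq_le]
    exact (nnnorm_transferMatrix_pow_apply_sq_le A B k i j i' j').trans
      (mul_le_mul' (nnnorm_entry_le_linfty_opNNNorm _ _ _) (nnnorm_entry_le_linfty_opNNNorm _ _ _))
  calc ‖transferMatrix A B ^ k‖₊ ^ 2 ≤ (Fintype.card (m × n) * g) ^ 2 := by
        gcongr
        exact linfty_opNNNorm_le_card_mul _ hentry
    _ = _ := by rw [mul_pow, NNReal.sq_sqrt]

end TransferMatrix

theorem ENNReal.tendsto_rpow_one_div_natCast {x : ℝ≥0} (hx : x ≠ 0) :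
    Tendsto (fun k : ℕ => (x : ℝ≥0∞) ^ (1 / k : ℝ)) atTop (𝓝 1) := by
  have := tendsto_const_nhds.nnrpow tendsto_one_div_atTop_nhds_zero_nat (Or.inl hx)
  rw [NNReal.rpow_zero] at this
  simpa [ENNReal.coe_rpow_of_ne_zero hx] using ENNReal.tendsto_coe.2 this

section Gelfand

variable {A₁ A₂ A₃ : Type*} [NormedRing A₁] [NormedAlgebra ℂ A₁] [CompleteSpace A₁]
  [NormedRing A₂] [NormedAlgebra ℂ A₂] [CompleteSpace A₂]
  [NormedRing A₃] [NormedAlgebra ℂ A₃] [CompleteSpace A₃]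

theorem spectralRadius_ne_top (a : A₁) : spectralRadius ℂ a ≠ ∞ :=
  ((spectrum.spectralRadius_le_pow_nnnorm_pow_one_div ℂ a 0).trans_lt
    (by simp [ENNReal.mul_lt_top])).ne

theorem spectralRadius_sq_le_mul_of_nnnorm_pow_sq_le (a : A₁) (b : A₂) (c : A₃) (K : ℝ≥0)
    (h : ∀ k : ℕ, ‖a ^ k‖₊ ^ 2 ≤ K * (‖b ^ k‖₊ * ‖c ^ k‖₊)) :
    spectralRadius ℂ a ^ 2 ≤ spectralRadius ℂ b * spectralRadius ℂ c := by
  have hL := ENNReal.Tendsto.pow (n := 2) (spectrum.gelfand_formula a)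
  -- `K + 1` rather than `K`, which may vanish, so that the constant's `k`-th root tends to `1`
  have hR := ENNReal.Tendsto.mul
    (ENNReal.tendsto_rpow_one_div_natCast (x := K + 1) (by positivity)) (Or.inl one_ne_zero)
    (ENNReal.Tendsto.mul (spectrum.gelfand_formula b) (Or.inr (spectralRadius_ne_top c))
      (spectrum.gelfand_formula c) (Or.inr (spectralRadius_ne_top b)))
    (Or.inr ENNReal.one_ne_top)
  rw [one_mul] at hR
  refine le_of_tendsto_of_tendsto' hL hR fun k => ?_
  have hk : (0 : ℝ) ≤ 1 / k := by positivity
  rw [← ENNReal.mul_rpow_of_nonneg _ _ hk, ← ENNReal.mul_rpow_of_nonneg _ _ hk,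
    ← ENNReal.rpow_mul_natCast, mul_comm, ENNReal.rpow_natCast_mul]
  gcongr
  exact_mod_cast (h k).trans (by gcongr; exact le_self_add)

end Gelfand

/-- **The fidelity per site between two uniform MPS is at most one:** the spectral radii
of the transfer matrices satisfy
`ρ(Σ_s A^s ⊗ conj(B^s))² ≤ ρ(Σ_s A^s ⊗ conj(A^s)) · ρ(Σ_s B^s ⊗ conj(B^s))`. -/
theorem uMPS_fidelity_per_site_le_one (D D' q : ℕ)
    (A : Fin q → Matrix (Fin D) (Fin D) ℂ) (B : Fin q → Matrix (Fin D') (Fin D') ℂ) :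
    spectralRadius ℂ (∑ s : Fin q, A s ⊗ₖ (B s).map (starRingEnd ℂ)) ^ 2
      ≤ spectralRadius ℂ (∑ s : Fin q, A s ⊗ₖ (A s).map (starRingEnd ℂ)) *
        spectralRadius ℂ (∑ s : Fin q, B s ⊗ₖ (B s).map (starRingEnd ℂ)) :=
  spectralRadius_sq_le_mul_of_nnnorm_pow_sq_le _ _ _ _ (nnnorm_transferMatrix_pow_sq_le A B)
end
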